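/- arXiv:2105.06863 — 7 statements merged into one kernel-verified Lean document; each statement's English description precedes it below -/
import Mathlib

section
/- Let $p$ be a prime, $n>0$ and $0\le d\le n$ integers, and let $y_1,\dots,y_s\in\mathbb{F}_p^n$ be linearly independent. Then for a uniformly random $d$-dimensional subspace $V\subseteq\mathbb{F}_p^n$, we have $\mathbb{P}[y_1,\dots,y_s\in V]\le (p^d/p^n)^s$. -/
/-!
Count the pairs `(W, z)` of a `d`-dimensional subspace `W` and a linearly independent
`s`-tuple `z` in `W` in two ways. Since `GL(V)` acts transitively on independent
`s`-tuples, every such tuple lies in the same number of `d`-dimensional subspaces as `y`, so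
`#{W ∋ y} · ∏_{i<s} (q^n - q^i) = #{W} · ∏_{i<s} (q^d - q^i)`.
The probability is therefore `∏_{i<s} (q^d - q^i)/(q^n - q^i)`, and each factor is at most
`q^d/q^n`.
-/

open Module

theorem div_pow_sub_pow_le {q : ℝ} (hq : 1 < q) {i d n : ℕ} (hdn : d ≤ n)
    (hin : i < n) :
    (q ^ d - q ^ i) / (q ^ n - q ^ i) ≤ q ^ d / q ^ n := by
  have hqi : 0 < q ^ i := by positivity
  have hdn' : q ^ d ≤ q ^ n := pow_le_pow_right₀ hq.le hdn
  rw [div_le_div_iff₀ (sub_pos.mpr (pow_lt_pow_right₀ hq hin)) (by positivity)]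
  nlinarith

theorem prod_pow_sub_pow_div_prod_pow_sub_pow_le {q : ℝ} (hq : 1 < q) {s d n : ℕ} (hsd : s ≤ d)
    (hdn : d ≤ n) :
    (∏ i : Fin s, (q ^ d - q ^ (i : ℕ))) / ∏ i : Fin s, (q ^ n - q ^ (i : ℕ)) ≤
      (q ^ d / q ^ n) ^ s := by
  calc _ = ∏ i : Fin s, (q ^ d - q ^ (i : ℕ)) / (q ^ n - q ^ (i : ℕ)) :=
        (Finset.prod_div_distrib ..).symm
    _ ≤ ∏ _i : Fin s, q ^ d / q ^ n := by
      refine Finset.prod_le_prod (fun i _ => div_nonneg ?_ ?_) fun i _ => ?_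
      · exact sub_nonneg.mpr (pow_le_pow_right₀ hq.le (by omega))
      · exact sub_nonneg.mpr (pow_le_pow_right₀ hq.le (by omega))
      · exact div_pow_sub_pow_le hq hdn (by omega)
    _ = (q ^ d / q ^ n) ^ s := by rw [Finset.prod_const, Finset.card_univ, Fintype.card_fin]

section Field

variable {K V : Type*} [Field K] [AddCommGroup V] [Module K V]

theorem Module.Basis.sumExtend_inl {ι : Type*} {v : ι → V} (hv : LinearIndependent K v)
    (i : ι) :
    Basis.sumExtend hv (Sum.inl i) = v i := by
  simp only [Basis.sumExtend, Basis.coe_reindex, Basis.coe_extend, Function.comp_apply]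
  rfl

theorem LinearIndependent.exists_linearEquiv_apply_eq [FiniteDimensional K V] {ι : Type*}
    {y z : ι → V} (hy : LinearIndependent K y) (hz : LinearIndependent K z) :
    ∃ e : V ≃ₗ[K] V, ∀ i, e (y i) = z i := by
  let by' := Basis.sumExtend hy
  let bz := Basis.sumExtend hz
  have := Module.Finite.finite_basis by'
  have := Module.Finite.finite_basis bz
  have : Finite ι :=
    .of_injective (β := ι ⊕ Basis.sumExtendIndex hy) Sum.inl Sum.inl_injective
  have : Finite (Basis.sumExtendIndex hy) := .of_injective (Sum.inr (α := ι)) Sum.inr_injective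
  have : Finite (Basis.sumExtendIndex hz) := .of_injective (Sum.inr (α := ι)) Sum.inr_injective
  have hcard : Nat.card (Basis.sumExtendIndex hy) = Nat.card (Basis.sumExtendIndex hz) := by
    have hy := Module.finrank_eq_nat_card_basis by'
    have hz := Module.finrank_eq_nat_card_basis bz
    rw [Nat.card_sum] at hy hz
    omega
  obtain ⟨f⟩ := Finite.card_eq.mp hcard
  refine ⟨by'.equiv bz (Equiv.sumCongr (Equiv.refl ι) f), fun i => ?_⟩
  rw [← Basis.sumExtend_inl hy, ← Basis.sumExtend_inl hz, Basis.equiv_apply]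
  rfl

theorem card_finrank_eq_forall_mem_map {ι : Type*} (e : V ≃ₗ[K] V) (d : ℕ) (y : ι → V) :
    Nat.card {W : Submodule K V // finrank K W = d ∧ ∀ i, e (y i) ∈ W} =
      Nat.card {W : Submodule K V // finrank K W = d ∧ ∀ i, y i ∈ W} := by
  refine (Nat.card_congr (Equiv.subtypeEquiv (Submodule.orderIsoMapComap e).toEquiv
    fun W => ?_)).symm
  change _ ↔ finrank K (W.map (e : V →ₗ[K] V)) = d ∧ ∀ i, e (y i) ∈ W.map (e : V →ₗ[K] V)
  simp only [LinearEquiv.finrank_map_eq, Submodule.mem_map_equiv, LinearEquiv.symm_apply_apply]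

theorem card_finrank_eq_forall_mem_eq_of_linearIndependent [FiniteDimensional K V] {ι : Type*}
    {y z : ι → V} (hy : LinearIndependent K y) (hz : LinearIndependent K z) (d : ℕ) :
    Nat.card {W : Submodule K V // finrank K W = d ∧ ∀ i, y i ∈ W} =
      Nat.card {W : Submodule K V // finrank K W = d ∧ ∀ i, z i ∈ W} := by
  obtain ⟨e, he⟩ := hy.exists_linearEquiv_apply_eq hz
  simp_rw [← he, card_finrank_eq_forall_mem_map]

theorem card_finrank_eq_forall_mem_eq_zero [FiniteDimensional K V] {s d : ℕ} (hds : d < s)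
    {y : Fin s → V} (hy : LinearIndependent K y) :
    Nat.card {W : Submodule K V // finrank K W = d ∧ ∀ i, y i ∈ W} = 0 := by
  refine Nat.card_eq_zero.mpr (.inl ⟨fun ⟨W, hW, hyW⟩ => hds.not_ge ?_⟩)
  have hyW' : LinearIndependent K fun i => (⟨y i, hyW i⟩ : W) := .of_comp W.subtype hy
  simpa [hW] using hyW'.fintype_card_le_finrank

end Field

section FiniteField

variable {K V : Type*} [Field K] [Fintype K] [AddCommGroup V] [Module K V] [Finite V]

local notation "q" => Fintype.card K

theorem card_finrank_eq_forall_mem_mul_prod {s d : ℕ} (hsd : s ≤ d) {y : Fin s → V}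
    (hy : LinearIndependent K y) :
    Nat.card {W : Submodule K V // finrank K W = d ∧ ∀ i, y i ∈ W} *
        ∏ i : Fin s, (q ^ finrank K V - q ^ (i : ℕ)) =
      Nat.card {W : Submodule K V // finrank K W = d} * ∏ i : Fin s, (q ^ d - q ^ (i : ℕ)) := by
  have : Fintype {z : Fin s → V // LinearIndependent K z} := .ofFinite _
  have : Fintype {W : Submodule K V // finrank K W = d} := .ofFinite _
  have hsn : s ≤ finrank K V := by simpa using hy.fintype_card_le_finrank
  let pairs : (Σ W : {W : Submodule K V // finrank K W = d},
        {z : Fin s → W.1 // LinearIndependent K z}) ≃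
      (Σ z : {z : Fin s → V // LinearIndependent K z},
        {W : Submodule K V // finrank K W = d ∧ ∀ i, z.1 i ∈ W}) :=
    { toFun := fun x => ⟨⟨fun i => x.2.1 i, x.2.2.map' _ (Submodule.ker_subtype _)⟩,
        ⟨x.1.1, x.1.2, fun i => (x.2.1 i).2⟩⟩
      invFun := fun x => ⟨⟨x.2.1, x.2.2.1⟩, ⟨fun i => ⟨x.1.1 i, x.2.2.2 i⟩,
        .of_comp x.2.1.subtype x.1.2⟩⟩
      left_inv := fun _ => rfl
      right_inv := fun _ => rfl }
  have hpairs := Nat.card_congr pairs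
  rw [Nat.card_sigma, Nat.card_sigma,
    Finset.sum_congr rfl fun W _ => by rw [card_linearIndependent (W.2.symm ▸ hsd), W.2],
    Finset.sum_congr rfl fun z _ => card_finrank_eq_forall_mem_eq_of_linearIndependent z.2 hy d,
    Finset.sum_const, Finset.sum_const, Finset.card_univ, Finset.card_univ,
    ← Nat.card_eq_fintype_card (α := {z : Fin s → V // LinearIndependent K z}),
    card_linearIndependent hsn, smul_eq_mul, smul_eq_mul] at hpairs
  rw [mul_comm, ← hpairs, Nat.card_eq_fintype_card]

theorem card_finrank_eq_forall_mem_div_card_finrank_eq_le {s d : ℕ} (hd : d ≤ finrank K V)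
    {y : Fin s → V} (hy : LinearIndependent K y) :
    (Nat.card {W : Submodule K V // finrank K W = d ∧ ∀ i, y i ∈ W} : ℝ) /
        Nat.card {W : Submodule K V // finrank K W = d} ≤
      ((q : ℝ) ^ d / (q : ℝ) ^ finrank K V) ^ s := by
  rcases lt_or_ge d s with hds | hsd
  · rw [card_finrank_eq_forall_mem_eq_zero hds hy, Nat.cast_zero, zero_div]
    positivity
  have hq : 1 < (q : ℝ) := by exact_mod_cast Fintype.one_lt_card
  have cast_prod (m : ℕ) (hm : s ≤ m) :
      ((∏ i : Fin s, (q ^ m - q ^ (i : ℕ)) : ℕ) : ℝ) =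
        ∏ i : Fin s, ((q : ℝ) ^ m - (q : ℝ) ^ (i : ℕ)) := by
    push_cast [Nat.cast_prod]
    refine Finset.prod_congr rfl fun i _ => ?_
    rw [Nat.cast_sub (Nat.pow_le_pow_right Fintype.card_pos (by omega))]
    push_cast
    rfl
  have hcount := congrArg (Nat.cast : ℕ → ℝ) (card_finrank_eq_forall_mem_mul_prod hsd hy)
  push_cast only [Nat.cast_mul, cast_prod _ hsd, cast_prod _ (hsd.trans hd)] at hcount
  have hpos : 0 < ∏ i : Fin s, ((q : ℝ) ^ finrank K V - (q : ℝ) ^ (i : ℕ)) :=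
    Finset.prod_pos fun i _ => sub_pos.mpr (pow_lt_pow_right₀ hq (by omega))
  calc _ ≤ (∏ i : Fin s, ((q : ℝ) ^ d - (q : ℝ) ^ (i : ℕ))) /
        ∏ i : Fin s, ((q : ℝ) ^ finrank K V - (q : ℝ) ^ (i : ℕ)) := by
        refine div_le_of_le_mul₀ (by positivity) ?_ ?_
        · exact div_nonneg (Finset.prod_nonneg fun i _ =>
            sub_nonneg.mpr (pow_le_pow_right₀ hq.le (by omega))) hpos.le
        · rw [div_mul_eq_mul_div, le_div_iff₀ hpos, hcount, mul_comm]
    _ ≤ _ := prod_pow_sub_pow_div_prod_pow_sub_pow_le hq hsd hd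

end FiniteField

theorem stmt_1_general (p : ℕ) (hp : p.Prime) (n d s : ℕ) (hd : d ≤ n)
    (y : Fin s → (Fin n → ZMod p)) (hy : LinearIndependent (ZMod p) y) :
    (Nat.card {V : Submodule (ZMod p) (Fin n → ZMod p) //
        Module.finrank (ZMod p) V = d ∧ ∀ i, y i ∈ V} : ℝ) /
      (Nat.card {V : Submodule (ZMod p) (Fin n → ZMod p) //
        Module.finrank (ZMod p) V = d} : ℝ)
    ≤ ((p : ℝ) ^ d / (p : ℝ) ^ n) ^ s := by
  have : Fact p.Prime := ⟨hp⟩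
  have hrank : finrank (ZMod p) (Fin n → ZMod p) = n := Module.finrank_fin_fun _
  simpa [ZMod.card, hrank] using
    card_finrank_eq_forall_mem_div_card_finrank_eq_le (hd.trans_eq hrank.symm) hy

/-- For linearly independent `y₁,…,y_s ∈ 𝔽_p^n`, the probability that a
uniformly random `d`-dimensional subspace `V ⊆ 𝔽_p^n` contains all `y_i` is at most
`(p^d/p^n)^s`. Probability is expressed as the ratio of counts of subspaces. -/
theorem stmt_1 (p : ℕ) (hp : p.Prime) (n d s : ℕ) (hn : 0 < n) (hd : d ≤ n)
    (y : Fin s → (Fin n → ZMod p)) (hy : LinearIndependent (ZMod p) y) :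
    (Nat.card {V : Submodule (ZMod p) (Fin n → ZMod p) //
        Module.finrank (ZMod p) V = d ∧ ∀ i, y i ∈ V} : ℝ) /
      (Nat.card {V : Submodule (ZMod p) (Fin n → ZMod p) //
        Module.finrank (ZMod p) V = d} : ℝ)
    ≤ ((p : ℝ) ^ d / (p : ℝ) ^ n) ^ s :=
  stmt_1_general p hp n d s hd y hy
end

section
/- Let $L\ge 1$, $k\ge 2$ be integers, $\mathbb{F}$ a field, and let $f:[L]^k\to\mathbb{F}$ satisfy $f(\ell_1,\dots,\ell_k)\ne 0$ whenever $\ell_1=\dots=\ell_k$, and $f(\ell_1,\dots,\ell_k)=0$ whenever $\ell_1,\dots,\ell_k$ are not all equal. Then the slice rank of $f$ equals $L$. -/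
/-- A function `f : [L]^k → F` has slice rank 1 if it factors as a nonzero function of one
coordinate times a nonzero function of the remaining `k-1` coordinates. -/
def IsSliceRankOne {k L : ℕ} {F : Type*} [Field F] (f : (Fin k → Fin L) → F) : Prop :=
  ∃ (i : Fin k) (g : Fin L → F) (h : ({j : Fin k // j ≠ i} → Fin L) → F),
    g ≠ 0 ∧ h ≠ 0 ∧ ∀ x, f x = g (x i) * h (fun j => x j.1)

/-- The slice rank of `f : [L]^k → F`: the least `r` such that `f` is a sum of `r`
slice-rank-1 functions. -/
noncomputable def sliceRank {k L : ℕ} {F : Type*} [Field F] (f : (Fin k → Fin L) → F) : ℕ :=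
  sInf {r : ℕ | ∃ g : Fin r → (Fin k → Fin L) → F,
    (∀ t, IsSliceRankOne (g t)) ∧ ∀ x, f x = ∑ t, g t x}

/-! Upper bound: `f` is the sum over `a` of the slices
`f(a,…,a) · δ_a(x_i) · [x_j = a for all j ≠ i]`.

Lower bound (Tao's argument): let `f = ∑_{t ∈ T} g_t` with slices `g_t`, and let
`S ⊆ T` be the slices in a coordinate `i`. A subspace of `F^L` of dimension `d` contains a vector
with at least `d` nonzero entries, so some `u` orthogonal to the `i`-th factors of the slices in `S`
has at least `L - |S|` nonzero entries. Contracting coordinate `i` against `u` kills the slices in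
`S`, leaves the other ones slices, and turns `f` into a diagonal tensor of order `k - 1` whose
diagonal is nonzero on the support of `u`. Induction on `k` ends at `k = 2`, where a diagonal
matrix of rank `L` is a sum of `|T|` matrices of rank at most one. -/

open Finset

section LinearAlgebra

variable {τ α F : Type*} [Field F]

namespace Matrix

variable {m n : Type*} [Fintype n]

theorem rank_add_le (A B : Matrix m n F) : (A + B).rank ≤ A.rank + B.rank := by
  have hrange : LinearMap.range (A + B).mulVecLin ≤
      LinearMap.range A.mulVecLin ⊔ LinearMap.range B.mulVecLin := by
    rintro _ ⟨v, rfl⟩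
    rw [mulVecLin_add, LinearMap.add_apply]
    exact Submodule.add_mem_sup (LinearMap.mem_range_self _ v) (LinearMap.mem_range_self _ v)
  exact (Submodule.finrank_mono hrange).trans (Submodule.finrank_add_le_finrank_add_finrank _ _)

theorem rank_sum_le (s : Finset τ) (A : τ → Matrix m n F) :
    (∑ t ∈ s, A t).rank ≤ ∑ t ∈ s, (A t).rank :=
  le_sum_of_subadditive (rank : Matrix m n F → ℕ) rank_zero.le rank_add_le s A

end Matrix

variable [Fintype α] [DecidableEq F]

theorem Submodule.exists_finrank_le_card_support (W : Submodule F (α → F)) :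
    ∃ u ∈ W, Module.finrank F W ≤ #{a | u a ≠ 0} := by
  have hfin : ((fun u : α → F => #{a | u a ≠ 0}) '' W).Finite :=
    (Set.finite_Iic (Fintype.card α)).subset <| by
      rintro _ ⟨u, -, rfl⟩
      exact card_le_univ _
  obtain ⟨_, ⟨u, huW, rfl⟩, hmax⟩ := Set.exists_max_image _ id hfin ⟨_, 0, W.zero_mem, rfl⟩
  refine ⟨u, huW, ?_⟩
  rw [← Fintype.card_subtype, ← Module.finrank_fintype_fun_eq_card (R := F)]
  refine LinearMap.finrank_le_finrank_of_injective
    (f := (LinearMap.funLeft F F ((↑) : {a // u a ≠ 0} → α)).comp W.subtype) ?_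
  rw [← LinearMap.ker_eq_bot, Submodule.eq_bot_iff]
  rintro ⟨w, hwW⟩ hrestrict
  -- `w` vanishes on the support of `u`, so if `w ≠ 0` then `u + w` has strictly larger support
  have hw : ∀ a, u a ≠ 0 → w a = 0 := fun a ha => congr_fun hrestrict ⟨a, ha⟩
  by_contra hne
  obtain ⟨a₀, ha₀⟩ : ∃ a, w a ≠ 0 := by
    by_contra! h
    exact hne (Subtype.ext (funext h))
  have hua₀ : u a₀ = 0 := by
    by_contra h
    exact ha₀ (hw a₀ h)
  have hsub : ({a | u a ≠ 0} : Finset α) ⊂ ({a | (u + w) a ≠ 0} : Finset α) := by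
    refine (ssubset_iff_of_subset fun a ha => ?_).mpr ⟨a₀, ?_, ?_⟩
    · simp only [mem_filter, mem_univ, true_and, Pi.add_apply] at ha ⊢
      rwa [hw a ha, add_zero]
    · simpa [hua₀] using ha₀
    · simpa using hua₀
  exact (card_lt_card hsub).not_ge (hmax _ ⟨u + w, W.add_mem huW hwW, rfl⟩)

theorem exists_orthogonal_card_le_card_support_add {σ : Type*} [Fintype σ] (G : σ → α → F) :
    ∃ u : α → F, (∀ s, u ⬝ᵥ G s = 0) ∧ Fintype.card α ≤ #{a | u a ≠ 0} + Fintype.card σ := by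
  let M : Matrix σ α F := Matrix.of G
  obtain ⟨u, hu, hcard⟩ := (LinearMap.ker M.mulVecLin).exists_finrank_le_card_support
  refine ⟨u, fun s => ?_, ?_⟩
  · rw [dotProduct_comm]
    exact congr_fun (LinearMap.mem_ker.mp hu) s
  · have hrank := LinearMap.finrank_range_add_finrank_ker M.mulVecLin
    have hheight := M.rank_le_card_height
    rw [Module.finrank_fintype_fun_eq_card] at hrank
    unfold Matrix.rank at hheight
    omega

end LinearAlgebra

namespace Equiv

variable {ι α : Type*} [DecidableEq ι] {i : ι}

theorem funSplitAt_symm_apply_self (a : α) (y : {j // j ≠ i} → α) :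
    (funSplitAt i α).symm (a, y) i = a := by
  simp

theorem funSplitAt_symm_apply_coe (a : α) (y : {j // j ≠ i} → α) (j : {j // j ≠ i}) :
    (funSplitAt i α).symm (a, y) j = y j := by
  simp [j.2]

end Equiv

namespace SliceRank

variable {ι α τ F : Type*} [Field F] [DecidableEq ι]

/-- Unlike `IsSliceRankOne`, the factors may vanish: contracting a slice can kill a factor. -/
def IsSlice (g : (ι → α) → F) : Prop :=
  ∃ (i : ι) (G : α → F) (H : ({j // j ≠ i} → α) → F), ∀ x, g x = G (x i) * H fun j => x j

def IsDiagonal (f : (ι → α) → F) : Prop :=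
  ∀ x, f x ≠ 0 → ∃ a, x = fun _ => a

theorem _root_.IsSliceRankOne.isSlice {k L : ℕ} {g : (Fin k → Fin L) → F}
    (hg : IsSliceRankOne g) : IsSlice g :=
  let ⟨i, G, H, _, _, hGH⟩ := hg
  ⟨i, G, H, hGH⟩

variable [Fintype α]

theorem IsSlice.rank_le_one {g : (ι → α) → F} (hg : IsSlice g) {a b : ι} (hab : a ≠ b)
    (hι : ∀ j, j = a ∨ j = b) :
    (Matrix.of fun x y => g fun j => if j = a then x else y).rank ≤ 1 := by
  obtain ⟨i, G, H, hGH⟩ := hg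
  rcases hι i with rfl | rfl
  · convert Matrix.rank_vecMulVec_le G fun y => H fun _ => y
    ext x y
    simp only [Matrix.of_apply, Matrix.vecMulVec_apply, hGH, if_pos]
    congr 2
    funext k
    simp [k.2]
  · convert Matrix.rank_vecMulVec_le (fun x => H fun _ => x) G
    ext x y
    simp only [Matrix.of_apply, Matrix.vecMulVec_apply, hGH, if_neg hab.symm, mul_comm]
    congr 2
    funext k
    simp [(hι k).resolve_right k.2]

theorem IsDiagonal.eq_sum_slices [Fintype ι] [DecidableEq α] {f : (ι → α) → F}
    (hf : IsDiagonal f) (i : ι) (x : ι → α) :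
    f x = ∑ a, (Pi.single a (f fun _ => a) : α → F) (x i) *
      if (fun j : {j // j ≠ i} => x j) = (fun _ => a) then 1 else 0 := by
  simp only [Pi.single_apply, ite_mul, zero_mul]
  simp only [sum_ite_eq, mem_univ, if_true, mul_ite, mul_one, mul_zero]
  split_ifs with hx
  · congr 1
    funext j
    by_cases hj : j = i
    · rw [hj]
    · exact congr_fun hx ⟨j, hj⟩
  · by_contra hne
    obtain ⟨a, rfl⟩ := hf x hne
    exact hx rfl

theorem IsDiagonal.exists_sum_isSliceRankOne {k L : ℕ} {f : (Fin k → Fin L) → F}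
    (hf : IsDiagonal f) (hne : ∀ a, f (fun _ => a) ≠ 0) (i : Fin k) :
    ∃ g : Fin L → (Fin k → Fin L) → F, (∀ t, IsSliceRankOne (g t)) ∧ ∀ x, f x = ∑ t, g t x := by
  refine ⟨_, fun a => ⟨i, Pi.single a (f fun _ => a),
    fun y => if y = (fun _ => a) then 1 else 0, ?_, ?_, fun x => rfl⟩, hf.eq_sum_slices i⟩
  · exact fun h => hne a (by simpa using congr_fun h a)
  · exact fun h => one_ne_zero (α := F) (by simpa using congr_fun h fun _ => a)

def contract (i : ι) (u : α → F) (f : (ι → α) → F) (y : {j // j ≠ i} → α) : F :=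
  ∑ a, u a * f ((Equiv.funSplitAt i α).symm (a, y))

section Contract

variable {i : ι} {u : α → F}

theorem contract_sum (T : Finset τ) (g : τ → (ι → α) → F) :
    contract i u (∑ t ∈ T, g t) = ∑ t ∈ T, contract i u (g t) := by
  funext y
  simp only [contract, Finset.sum_apply, mul_sum]
  exact sum_comm

theorem contract_eq_zero_of_dotProduct_eq_zero {g : (ι → α) → F} {G : α → F}
    {H : ({j // j ≠ i} → α) → F} (hg : ∀ x, g x = G (x i) * H fun j => x j) (hu : u ⬝ᵥ G = 0) :
    contract i u g = 0 := by
  funext y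
  simp only [contract, hg, Equiv.funSplitAt_symm_apply_self, Equiv.funSplitAt_symm_apply_coe,
    ← mul_assoc, ← sum_mul, Pi.zero_apply]
  rw [← dotProduct, hu, zero_mul]

theorem isSlice_contract_of_ne {g : (ι → α) → F} {j : ι} {G : α → F}
    {H : ({k // k ≠ j} → α) → F} (hg : ∀ x, g x = G (x j) * H fun k => x k) (hji : j ≠ i) :
    IsSlice (contract i u g) := by
  -- `H` does not read coordinate `j`, so any value (here `a`) may be inserted there
  refine ⟨⟨j, hji⟩, G, fun w => ∑ a, u a *
    H (fun k => (Equiv.funSplitAt i α).symm (a, (Equiv.funSplitAt ⟨j, hji⟩ α).symm (a, w)) k),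
    fun y => ?_⟩
  simp only [contract, hg, mul_sum]
  refine sum_congr rfl fun a _ => ?_
  rw [mul_left_comm]
  congr 3
  · simp [hji]
  · funext k
    by_cases hk : (k : ι) = i
    · simp [hk]
    · simp [hk, k.2]

theorem isDiagonal_contract {f : (ι → α) → F} (hf : IsDiagonal f) :
    IsDiagonal (contract i u f) := by
  intro y hy
  obtain ⟨a, -, ha⟩ := exists_ne_zero_of_sum_ne_zero hy
  obtain ⟨b, hb⟩ := hf _ (right_ne_zero_of_mul ha)
  exact ⟨b, funext fun j => by rw [← Equiv.funSplitAt_symm_apply_coe a y j, hb]⟩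

theorem IsDiagonal.contract_apply_const {f : (ι → α) → F} (hf : IsDiagonal f) {j : ι}
    (hji : j ≠ i) (b : α) : contract i u f (fun _ => b) = u b * f fun _ => b := by
  rw [contract, sum_eq_single b]
  · congr 2
    funext k
    by_cases hk : k = i
    · subst hk
      exact Equiv.funSplitAt_symm_apply_self b _
    · exact Equiv.funSplitAt_symm_apply_coe b _ ⟨k, hk⟩
  · intro a _ hab
    suffices f ((Equiv.funSplitAt i α).symm (a, fun _ => b)) = 0 by rw [this, mul_zero]
    by_contra h
    obtain ⟨c, hc⟩ := hf _ h
    have hac : a = c := by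
      rw [← Equiv.funSplitAt_symm_apply_self (i := i) a (fun _ => b), hc]
    have hbc : b = c := by
      rw [← Equiv.funSplitAt_symm_apply_coe a (fun _ => b) ⟨j, hji⟩, hc]
    exact hab (hac.trans hbc.symm)
  · simp

end Contract

variable [DecidableEq F] [DecidableEq α]

def diagSupport (f : (ι → α) → F) : Finset α := {a | f (fun _ => a) ≠ 0}

theorem IsDiagonal.card_diagSupport_add_le {f : (ι → α) → F} (hf : IsDiagonal f) {i j : ι}
    (hji : j ≠ i) (u : α → F) :
    #(diagSupport f) + #{a | u a ≠ 0} ≤ #(diagSupport (contract i u f)) + Fintype.card α := by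
  have hsupp : diagSupport (contract i u f) = ({a | u a ≠ 0} : Finset α) ∩ diagSupport f := by
    ext b
    simp [diagSupport, hf.contract_apply_const hji]
  have hunion := card_le_univ (({a | u a ≠ 0} : Finset α) ∪ diagSupport f)
  have hinter := card_inter_add_card_union ({a | u a ≠ 0} : Finset α) (diagSupport f)
  rw [hsupp]
  omega

theorem IsDiagonal.card_diagSupport_le_of_card_eq_two [Fintype ι] {f : (ι → α) → F}
    (hf : IsDiagonal f) (hι : Fintype.card ι = 2) {T : Finset τ} {g : τ → (ι → α) → F}
    (hg : ∀ t ∈ T, IsSlice (g t)) (hfg : f = ∑ t ∈ T, g t) : #(diagSupport f) ≤ #T := by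
  obtain ⟨a, b, hab, huniv⟩ := card_eq_two.mp (card_univ.trans hι)
  have hmem : ∀ j, j = a ∨ j = b := fun j => by simpa [huniv] using mem_univ j
  let pair (x y : α) : ι → α := fun j => if j = a then x else y
  have hdiag : Matrix.diagonal (fun x => f fun _ => x) =
      ∑ t ∈ T, Matrix.of fun x y => g t (pair x y) := by
    ext x y
    rw [Matrix.sum_apply]
    simp only [Matrix.of_apply, ← Finset.sum_apply, ← hfg, Matrix.diagonal_apply]
    split_ifs with hxy
    · subst hxy
      congr 1
      funext j
      simp [pair]
    · by_contra hne
      obtain ⟨c, hc⟩ := hf _ (Ne.symm hne)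
      have hx : x = c := by simpa [pair] using congr_fun hc a
      have hy : y = c := by simpa [pair, hab.symm] using congr_fun hc b
      exact hxy (hx.trans hy.symm)
  calc #(diagSupport f) = (Matrix.diagonal fun x => f fun _ => x).rank := by
        rw [Matrix.rank_diagonal, Fintype.card_subtype]
        rfl
    _ ≤ ∑ t ∈ T, 1 := hdiag ▸ (Matrix.rank_sum_le _ _).trans
        (sum_le_sum fun t ht => (hg t ht).rank_le_one hab hmem)
    _ = #T := by simp

theorem IsDiagonal.card_diagSupport_le_of_contract {f : (ι → α) → F} (hf : IsDiagonal f)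
    {i j : ι} (hji : j ≠ i) {T : Finset τ} {g : τ → (ι → α) → F} (hg : ∀ t ∈ T, IsSlice (g t))
    (hfg : f = ∑ t ∈ T, g t)
    (ih : ∀ (f' : ({j // j ≠ i} → α) → F) (T' : Finset τ) (g' : τ → ({j // j ≠ i} → α) → F),
      IsDiagonal f' → (∀ t ∈ T', IsSlice (g' t)) → f' = ∑ t ∈ T', g' t →
        #(diagSupport f') ≤ #T') :
    #(diagSupport f) ≤ #T := by
  have : Nonempty ι := ⟨i⟩
  choose! c G H hGH using hg
  obtain ⟨u, hu, hcard⟩ :=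
    exists_orthogonal_card_le_card_support_add fun t : T.filter (c · = i) => G t
  have hsum : contract i u f = ∑ t ∈ T.filter (c · ≠ i), contract i u (g t) := by
    rw [hfg, contract_sum, ← sum_filter_add_sum_filter_not T (c · = i), add_eq_right]
    refine sum_eq_zero fun t ht => ?_
    obtain ⟨htT, rfl⟩ := mem_filter.mp ht
    exact contract_eq_zero_of_dotProduct_eq_zero (hGH t htT) (hu ⟨t, ht⟩)
  have hslice : ∀ t ∈ T.filter (c · ≠ i), IsSlice (contract i u (g t)) := fun t ht =>
    isSlice_contract_of_ne (hGH t (mem_filter.mp ht).1) (mem_filter.mp ht).2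
  have hcontract := ih _ _ _ (isDiagonal_contract hf) hslice hsum
  have hsplit : #(T.filter (c · = i)) + #(T.filter (c · ≠ i)) = #T :=
    card_filter_add_card_filter_not _
  have hsupport := hf.card_diagSupport_add_le hji u
  rw [Fintype.card_coe] at hcard
  omega

theorem IsDiagonal.card_diagSupport_le [Fintype ι] {f : (ι → α) → F} (hf : IsDiagonal f)
    (hι : 2 ≤ Fintype.card ι) {T : Finset τ} {g : τ → (ι → α) → F}
    (hg : ∀ t ∈ T, IsSlice (g t)) (hfg : f = ∑ t ∈ T, g t) : #(diagSupport f) ≤ #T := by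
  generalize hn : Fintype.card ι = n at hι
  induction n, hι using Nat.le_induction generalizing ι f T g with
  | base => exact hf.card_diagSupport_le_of_card_eq_two hn hg hfg
  | succ n hn2 ih =>
    have : Nontrivial ι := Fintype.one_lt_card_iff_nontrivial.mp (by omega)
    obtain ⟨i⟩ : Nonempty ι := inferInstance
    obtain ⟨j, hji⟩ := exists_ne i
    refine hf.card_diagSupport_le_of_contract hji hg hfg fun f' T' g' hf' hg' hfg' => ?_
    refine ih hf' hg' hfg' ?_
    rw [Fintype.card_subtype_compl, Fintype.card_subtype_eq, hn]
    rfl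

theorem IsDiagonal.card_diagSupport_le_of_sum_isSliceRankOne {k L r : ℕ}
    (hk : 2 ≤ k) {f : (Fin k → Fin L) → F} (hf : IsDiagonal f) {g : Fin r → (Fin k → Fin L) → F}
    (hg : ∀ t, IsSliceRankOne (g t)) (hfg : ∀ x, f x = ∑ t, g t x) :
    #(diagSupport f) ≤ r := by
  simpa using hf.card_diagSupport_le (by simpa using hk) (T := univ) (fun t _ => (hg t).isSlice)
    (funext fun x => by simp [hfg])

end SliceRank

theorem stmt_5_general {k L : ℕ} (hk : 2 ≤ k) {F : Type*} [Field F]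
    (f : (Fin k → Fin L) → F)
    (hdiag : ∀ x : Fin k → Fin L, (∀ i i', x i = x i') → f x ≠ 0)
    (hoff : ∀ x : Fin k → Fin L, ¬ (∀ i i', x i = x i') → f x = 0) :
    sliceRank f = L := by
  classical
  have hf : SliceRank.IsDiagonal f := fun x hx =>
    ⟨x ⟨0, by omega⟩, funext fun i => not_not.mp (mt (hoff x) hx) i _⟩
  have hne : ∀ a, f (fun _ => a) ≠ 0 := fun a => hdiag _ fun _ _ => rfl
  have hdecomp := hf.exists_sum_isSliceRankOne hne ⟨0, by omega⟩
  refine le_antisymm (Nat.sInf_le hdecomp) (le_csInf ⟨L, hdecomp⟩ ?_)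
  rintro r ⟨g, hg, hfg⟩
  simpa [SliceRank.diagSupport, hne] using hf.card_diagSupport_le_of_sum_isSliceRankOne hk hg hfg

/-- A diagonal tensor with nonzero diagonal entries has slice rank `L`. -/
theorem stmt_5 {k L : ℕ} (hL : 1 ≤ L) (hk : 2 ≤ k) {F : Type*} [Field F]
    (f : (Fin k → Fin L) → F)
    (hdiag : ∀ x : Fin k → Fin L, (∀ i i', x i = x i') → f x ≠ 0)
    (hoff : ∀ x : Fin k → Fin L, ¬ (∀ i i', x i = x i') → f x = 0) :
    sliceRank f = L :=
  stmt_5_general hk f hdiag hoff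
end

section
/- Let $L\ge 1$, $k\ge 2$ be integers and $\mathbb{F}$ a field. Fix total orderings $\preceq^1,\dots,\preceq^k$ on $[L]$ and let $\preceq$ be the resulting product partial order on $[L]^k$. Suppose $f:[L]^k\to\mathbb{F}$ is such that the support $S=\{(\ell_1,\dots,\ell_k): f(\ell_1,\dots,\ell_k)\ne 0\}$ is an antichain with respect to $\preceq$. Then the slice rank of $f$ equals $\min_{S=S_1\cup\dots\cup S_k}(|\pi_1(S_1)|+\dots+|\pi_k(S_k)|)$, where the minimum is over all partitions of $S$ into $k$ parts and $\pi_i$ denotes projection to the $i$-th coordinate. -/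
open Finset

section Decomposition

variable {k L : ℕ} {F : Type*} [Field F]

def HasSliceDecomposition (f : (Fin k → Fin L) → F) (r : ℕ) : Prop :=
  ∃ g : Fin r → (Fin k → Fin L) → F, (∀ t, IsSliceRankOne (g t)) ∧ ∀ x, f x = ∑ t, g t x

theorem sliceRank_eq_sInf (f : (Fin k → Fin L) → F) :
    sliceRank f = sInf {r | HasSliceDecomposition f r} := rfl

theorem hasSliceDecomposition_zero : HasSliceDecomposition (0 : (Fin k → Fin L) → F) 0 :=
  ⟨Fin.elim0, fun t => t.elim0, fun _ => by simp⟩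

theorem IsSliceRankOne.hasSliceDecomposition {f : (Fin k → Fin L) → F} (hf : IsSliceRankOne f) :
    HasSliceDecomposition f 1 :=
  ⟨fun _ => f, fun _ => hf, fun _ => by simp⟩

theorem HasSliceDecomposition.add {f g : (Fin k → Fin L) → F} {r s : ℕ}
    (hf : HasSliceDecomposition f r) (hg : HasSliceDecomposition g s) :
    HasSliceDecomposition (f + g) (r + s) := by
  obtain ⟨a, ha, hfa⟩ := hf
  obtain ⟨b, hb, hgb⟩ := hg
  refine ⟨Fin.append a b, Fin.addCases (by simpa using ha) (by simpa using hb), fun x => ?_⟩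
  simp [Fin.sum_univ_add, hfa, hgb]

theorem HasSliceDecomposition.sum {ι : Type*} (s : Finset ι) {f : ι → (Fin k → Fin L) → F}
    {r : ι → ℕ} (hf : ∀ i ∈ s, HasSliceDecomposition (f i) (r i)) :
    HasSliceDecomposition (∑ i ∈ s, f i) (∑ i ∈ s, r i) := by
  classical
  induction s using Finset.induction_on with
  | empty => simpa using hasSliceDecomposition_zero
  | insert i s hi ih =>
    rw [sum_insert hi, sum_insert hi]
    exact (hf i (mem_insert_self i s)).add (ih fun j hj => hf j (mem_insert_of_mem hj))

theorem isSliceRankOne_ite_coord_eq {h : (Fin k → Fin L) → F} {i : Fin k} {a : Fin L}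
    (ha : ∃ y, h y ≠ 0 ∧ y i = a) : IsSliceRankOne fun x => if x i = a then h x else 0 := by
  obtain ⟨y, hy, rfl⟩ := ha
  let e := Equiv.funSplitAt i (Fin L)
  have he : ∀ x, e.symm (x i, fun j => x j.1) = x := e.symm_apply_apply
  refine ⟨i, Pi.single (y i) 1, fun z => h (e.symm (y i, z)), by simp, fun h0 => hy ?_, fun x => ?_⟩
  · simpa only [he, Pi.zero_apply] using congrFun h0 fun j => y j.1
  · dsimp only
    by_cases hx : x i = y i
    · rw [if_pos hx, hx, Pi.single_eq_same, one_mul, ← hx, he]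
    · rw [if_neg hx, Pi.single_eq_of_ne hx, zero_mul]

def coordSupport [DecidableEq F] (i : Fin k) (h : (Fin k → Fin L) → F) : Finset (Fin L) :=
  (univ.filter (h · ≠ 0)).image (· i)

theorem hasSliceDecomposition_card_coordSupport [DecidableEq F] (i : Fin k)
    (h : (Fin k → Fin L) → F) : HasSliceDecomposition h #(coordSupport i h) := by
  have hsum : h = ∑ a ∈ coordSupport i h, fun x => if x i = a then h x else 0 := by
    ext x
    rw [Finset.sum_apply, sum_ite_eq]
    by_cases hx : h x = 0
    · simp [hx]
    · simp only [coordSupport, mem_image, mem_filter, mem_univ, true_and]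
      rw [if_pos ⟨x, hx, rfl⟩]
  nth_rw 1 [hsum]
  rw [card_eq_sum_ones]
  refine HasSliceDecomposition.sum _ fun a ha =>
    (isSliceRankOne_ite_coord_eq ?_).hasSliceDecomposition
  simpa [coordSupport] using ha

theorem exists_hasSliceDecomposition_le_of_support_subset {f : (Fin k → Fin L) → F}
    (S : Fin k → Set (Fin k → Fin L)) (hS : Function.support f ⊆ ⋃ i, S i) :
    ∃ r ≤ ∑ i, ((fun x => x i) '' S i).ncard, HasSliceDecomposition f r := by
  classical
  have hdisj : (↑(univ : Finset (Fin k)) : Set (Fin k)).PairwiseDisjoint (disjointed S) :=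
    fun i _ j _ hij => disjoint_disjointed S hij
  have hf : f = ∑ i, (disjointed S i).indicator f := by
    ext x
    rw [Finset.sum_apply, ← indicator_biUnion_apply _ _ hdisj]
    simp only [mem_univ, Set.iUnion_true, iUnion_disjointed, Set.indicator_eq_self.2 hS]
  refine ⟨_, sum_le_sum fun i _ => ?_, hf ▸ HasSliceDecomposition.sum univ
    fun i _ => hasSliceDecomposition_card_coordSupport i _⟩
  rw [← Set.ncard_coe_finset]
  refine Set.ncard_le_ncard ?_ (Set.toFinite _)
  simp only [coordSupport, coe_image, coe_filter, mem_univ, true_and]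
  exact Set.image_mono fun x hx => disjointed_subset S i (Set.mem_of_indicator_ne_zero hx)

end Decomposition

theorem Finset.exists_max_image_rel {α β : Type*} (r : β → β → Prop) [IsLinearOrder β r]
    (s : Finset α) (f : α → β) (hs : s.Nonempty) : ∃ m ∈ s, ∀ a ∈ s, r (f a) (f m) := by
  induction hs using Finset.Nonempty.cons_induction with
  | singleton a => exact ⟨a, mem_singleton_self a, fun b hb => mem_singleton.1 hb ▸ refl_of r _⟩
  | cons a s _ _ ih =>
    obtain ⟨m, hm, hmax⟩ := ih
    rcases total_of r (f m) (f a) with h | h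
    · exact ⟨a, mem_cons_self a s, fun b hb =>
        (mem_cons.1 hb).elim (fun hba => hba ▸ refl_of r _) fun hb => _root_.trans (hmax b hb) h⟩
    · exact ⟨m, mem_cons_of_mem hm, fun b hb =>
        (mem_cons.1 hb).elim (fun hba => hba ▸ h) (hmax b)⟩

section LeadingIndices

variable {ι F : Type*} [Field F] (r : ι → ι → Prop)

def leadingIndices (V : Submodule F (ι → F)) : Set ι :=
  {a | ∃ v ∈ V, v a ≠ 0 ∧ ∀ b, r a b → b ≠ a → v b = 0}

theorem linearIndependent_of_forall_rel_ne_eq_zero [IsLinearOrder ι r] {s : Set ι}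
    (w : s → ι → F) (hlead : ∀ a, w a a ≠ 0) (hvan : ∀ a : s, ∀ b, r a b → b ≠ a → w a b = 0) :
    LinearIndependent F w := by
  classical
  rw [linearIndependent_iff']
  intro t c hsum a ha
  by_contra hca
  obtain ⟨m, hm, hmax⟩ :=
    (t.filter (c · ≠ 0)).exists_max_image_rel r (↑) ⟨a, mem_filter.2 ⟨ha, hca⟩⟩
  obtain ⟨hmt, hcm⟩ := mem_filter.1 hm
  have hsum_m : ∑ b ∈ t, c b * w b m = c m * w m m := by
    refine sum_eq_single_of_mem m hmt fun b hbt hbm => ?_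
    by_cases hcb : c b = 0
    · rw [hcb, zero_mul]
    · rw [hvan b m (hmax b (mem_filter.2 ⟨hbt, hcb⟩)) fun h => hbm (Subtype.ext h).symm, mul_zero]
  have := congrFun hsum m
  simp only [Finset.sum_apply, Pi.smul_apply, smul_eq_mul, Pi.zero_apply, hsum_m] at this
  exact mul_ne_zero hcm (hlead m) this

theorem ncard_leadingIndices_le_finrank [Fintype ι] [IsLinearOrder ι r]
    (V : Submodule F (ι → F)) : (leadingIndices r V).ncard ≤ Module.finrank F V := by
  classical
  choose w hwV hlead hvan using fun a : leadingIndices r V => a.2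
  calc (leadingIndices r V).ncard = Fintype.card (leadingIndices r V) := by
        rw [Set.ncard_eq_toFinset_card', Set.toFinset_card]
    _ = Module.finrank F (Submodule.span F (Set.range w)) :=
      (finrank_span_eq_card (linearIndependent_of_forall_rel_ne_eq_zero r w hlead hvan)).symm
    _ ≤ Module.finrank F V :=
      Submodule.finrank_mono (Submodule.span_le.2 (Set.range_subset_iff.2 hwV))

theorem exists_dotProduct_eq_zero_of_notMem_leadingIndices [Fintype ι] [DecidableEq ι]
    [Std.Refl r] {V : Submodule F (ι → F)} {p : ι} (hp : p ∉ leadingIndices r V) :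
    ∃ φ : ι → F, φ p = 1 ∧ (∀ b, φ b ≠ 0 → r p b) ∧ ∀ v ∈ V, φ ⬝ᵥ v = 0 := by
  -- `φ` comes from a functional separating `Pi.single p 1` from `V` plus the vectors vanishing
  -- on `{b | r p b}`.
  let U : Submodule F (ι → F) := Submodule.pi {b | r p b} fun _ => ⊥
  have hsingle : Pi.single p 1 ∉ V ⊔ U := by
    rintro hmem
    obtain ⟨v, hv, u, hu, hvu⟩ := Submodule.mem_sup.1 hmem
    simp only [U, Submodule.mem_pi, Set.mem_ofPred_eq, Submodule.mem_bot] at hu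
    have hv_eq : ∀ b, v b = (Pi.single p (1 : F) : ι → F) b - u b := fun b => by rw [← hvu]; simp
    refine hp ⟨v, hv, ?_, fun b hb hbp => ?_⟩
    · simp [hv_eq, hu p (refl_of r p)]
    · simp [hv_eq, hu b hb, hbp]
  obtain ⟨ψ, hψp, hψ⟩ := Submodule.exists_dual_map_eq_bot_of_notMem hsingle inferInstance
  rw [← LinearMap.le_ker_iff_map] at hψ
  refine ⟨fun b => ψ (Pi.single b 1) / ψ (Pi.single p 1), div_self hψp, fun b hb => ?_,
    fun v hv => ?_⟩
  · by_contra hpb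
    refine hb ?_
    dsimp only
    rw [LinearMap.mem_ker.1 (hψ (Submodule.mem_sup_right (show Pi.single b 1 ∈ U from ?_))),
      zero_div]
    simp only [U, Submodule.mem_pi, Set.mem_ofPred_eq, Submodule.mem_bot]
    intro c hc
    exact Pi.single_eq_of_ne (fun h : c = b => hpb (h ▸ hc)) _
  · have hψv : ψ v = 0 := LinearMap.mem_ker.1 (hψ (Submodule.mem_sup_left hv))
    have hψ_sum : ψ v = ∑ b, v b * ψ (Pi.single b 1) := by
      conv_lhs => rw [← Finset.univ_sum_single v]
      rw [map_sum]
      refine sum_congr rfl fun b _ => ?_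
      rw [← smul_eq_mul, ← map_smul, ← Pi.single_smul, smul_eq_mul, mul_one]
    calc _ = ψ v / ψ (Pi.single p 1) := by
          rw [hψ_sum, sum_div]
          exact sum_congr rfl fun b _ => by ring
      _ = 0 := by rw [hψv, zero_div]

end LeadingIndices

theorem sum_prod_mul_eq_dotProduct_mul {ι α R : Type*} [Fintype ι] [DecidableEq ι] [Fintype α]
    [CommSemiring R] (φ : ι → α → R) (j : ι) (γ : α → R) (η : ({m // m ≠ j} → α) → R) :
    ∑ y : ι → α, (∏ i, φ i (y i)) * (γ (y j) * η fun m => y m)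
      = (φ j ⬝ᵥ γ) * ∑ z, (∏ m : {m // m ≠ j}, φ m (z m)) * η z := by
  rw [← (Equiv.funSplitAt j α).symm.sum_comp, Fintype.sum_prod_type, dotProduct, sum_mul_sum]
  refine sum_congr rfl fun a _ => sum_congr rfl fun z _ => ?_
  have hz : ∀ m : {m // m ≠ j}, (Equiv.funSplitAt j α).symm (a, z) m = z m := fun m => by
    simp [m.2]
  simp only [Fintype.prod_eq_mul_prod_subtype_ne _ j, hz]
  simp only [Equiv.funSplitAt_symm_apply, dite_true]
  ring

theorem sum_prod_mul_eq_apply {ι α R : Type*} [Fintype ι] [DecidableEq ι] [Fintype α]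
    [CommSemiring R] (le : ι → α → α → Prop) (f : (ι → α) → R) {x : ι → α}
    (hx : ∀ y, f y ≠ 0 → (∀ i, le i (x i) (y i)) → y = x) (φ : ι → α → R)
    (hφx : ∀ i, φ i (x i) = 1) (hφ : ∀ i b, φ i b ≠ 0 → le i (x i) b) :
    ∑ y, (∏ i, φ i (y i)) * f y = f x := by
  rw [sum_eq_single x, prod_eq_one fun i _ => hφx i, one_mul]
  · intro y _ hyx
    by_cases hfy : f y = 0
    · rw [hfy, mul_zero]
    obtain ⟨i, hi⟩ : ∃ i, φ i (y i) = 0 := by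
      by_contra! h
      exact hyx (hx y hfy fun i => hφ i _ (h i))
    rw [prod_eq_zero (mem_univ i) hi, zero_mul]
  · simp

section LowerBound

variable {k L r : ℕ} {F : Type*} [Field F] (le : Fin k → Fin L → Fin L → Prop)
  [∀ i, IsLinearOrder (Fin L) (le i)] {f : (Fin k → Fin L) → F}

theorem exists_coord_mem_leadingIndices (idx : Fin r → Fin k) (γ : Fin r → Fin L → F)
    (η : ∀ t, ({j // j ≠ idx t} → Fin L) → F)
    (hfg : ∀ x, f x = ∑ t, γ t (x (idx t)) * η t fun j => x j)
    {x : Fin k → Fin L} (hx : f x ≠ 0) (hmax : ∀ y, f y ≠ 0 → (∀ i, le i (x i) (y i)) → y = x) :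
    ∃ i, x i ∈ leadingIndices (le i)
      (Submodule.span F (Set.range fun t : {t // idx t = i} => γ t)) := by
  by_contra! hlead
  choose φ hφx hφle hφV using fun i =>
    exists_dotProduct_eq_zero_of_notMem_leadingIndices (le i) (hlead i)
  have hzero : ∑ y, (∏ i, φ i (y i)) * f y = 0 := by
    simp_rw [hfg, mul_sum]
    rw [sum_comm]
    refine sum_eq_zero fun t _ => ?_
    rw [sum_prod_mul_eq_dotProduct_mul, hφV _ _ (Submodule.subset_span ⟨⟨t, rfl⟩, rfl⟩), zero_mul]
  exact hx ((sum_prod_mul_eq_apply le f hmax φ hφx hφle).symm.trans hzero)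

theorem exists_cover_le_of_hasSliceDecomposition
    (hanti : ∀ x y, f x ≠ 0 → f y ≠ 0 → (∀ i, le i (x i) (y i)) → x = y)
    (hf : HasSliceDecomposition f r) :
    ∃ S : Fin k → Set (Fin k → Fin L), (⋃ i, S i) = {x | f x ≠ 0} ∧
      ∑ i, ((fun x => x i) '' S i).ncard ≤ r := by
  classical
  obtain ⟨g, hg, hfg⟩ := hf
  choose idx γ η _ _ hγη using hg
  let V i : Submodule F (Fin L → F) := Submodule.span F (Set.range fun t : {t // idx t = i} => γ t)
  have hcover x (hx : f x ≠ 0) : ∃ i, x i ∈ leadingIndices (le i) (V i) :=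
    exists_coord_mem_leadingIndices le idx γ η (fun y => by simp only [hfg, hγη]) hx
      fun y hy hxy => (hanti x y hx hy hxy).symm
  refine ⟨fun i => {x | f x ≠ 0 ∧ x i ∈ leadingIndices (le i) (V i)}, ?_, ?_⟩
  · ext x
    simp only [Set.mem_iUnion, Set.mem_ofPred_eq]
    exact ⟨fun ⟨_, hx, _⟩ => hx, fun hx => (hcover x hx).imp fun _ hi => ⟨hx, hi⟩⟩
  calc ∑ i, ((fun x => x i) '' {x | f x ≠ 0 ∧ x i ∈ leadingIndices (le i) (V i)}).ncard
      ≤ ∑ i, (leadingIndices (le i) (V i)).ncard := sum_le_sum fun i _ =>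
        Set.ncard_le_ncard (Set.image_subset_iff.2 fun _ hx => hx.2) (Set.toFinite _)
    _ ≤ ∑ i, Module.finrank F (V i) := sum_le_sum fun i _ => ncard_leadingIndices_le_finrank _ _
    _ ≤ ∑ i, Fintype.card {t // idx t = i} := sum_le_sum fun i _ => finrank_range_le_card _
    _ = r := by simp [Fintype.card_subtype, ← card_eq_sum_card_fiberwise]

end LowerBound

theorem Nat.sInf_eq_sInf_of_forall_exists_le {A B : Set ℕ} (hAB : ∀ a ∈ A, ∃ b ∈ B, b ≤ a)
    (hBA : ∀ b ∈ B, ∃ a ∈ A, a ≤ b) : sInf A = sInf B := by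
  rcases A.eq_empty_or_nonempty with rfl | hA
  · have hB : B = ∅ := Set.eq_empty_of_forall_notMem fun b hb => by simpa using hBA b hb
    rw [hB]
  have hB : B.Nonempty := (hAB _ hA.some_mem).imp fun _ hb => hb.1
  obtain ⟨a, ha, hab⟩ := hBA _ (Nat.sInf_mem hB)
  obtain ⟨b, hb, hba⟩ := hAB _ (Nat.sInf_mem hA)
  exact le_antisymm ((Nat.sInf_le ha).trans hab) ((Nat.sInf_le hb).trans hba)

theorem stmt_6_general {k L : ℕ} {F : Type*} [Field F]
    (le : Fin k → Fin L → Fin L → Prop) (hle : ∀ i, IsLinearOrder (Fin L) (le i))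
    (f : (Fin k → Fin L) → F)
    (hanti : ∀ x ∈ {x : Fin k → Fin L | f x ≠ 0}, ∀ y ∈ {x : Fin k → Fin L | f x ≠ 0},
      (∀ i, le i (x i) (y i)) → x = y) :
    sliceRank f = sInf {N : ℕ | ∃ S : Fin k → Set (Fin k → Fin L),
      (⋃ i, S i) = {x : Fin k → Fin L | f x ≠ 0} ∧
      N = ∑ i, Set.ncard ((fun x => x i) '' S i)} := by
  rw [sliceRank_eq_sInf]
  apply Nat.sInf_eq_sInf_of_forall_exists_le
  · rintro r hr
    obtain ⟨S, hS, hSr⟩ := exists_cover_le_of_hasSliceDecomposition le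
      (fun x y hx hy => hanti x hx y hy) hr
    exact ⟨_, ⟨S, hS, rfl⟩, hSr⟩
  · rintro _ ⟨S, hS, rfl⟩
    obtain ⟨r, hr, hdec⟩ := exists_hasSliceDecomposition_le_of_support_subset S hS.ge
    exact ⟨r, hdec, hr⟩

/-- Sawin–Tao: if the support of `f` is an antichain for the product of `k`
total orders on `[L]`, then the slice rank of `f` is the minimum over partitions
`S = S₁ ∪ ⋯ ∪ S_k` of `|π₁(S₁)| + ⋯ + |π_k(S_k)|`. -/
theorem stmt_6 {k L : ℕ} (hL : 1 ≤ L) (hk : 2 ≤ k) {F : Type*} [Field F]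
    (le : Fin k → Fin L → Fin L → Prop) (hle : ∀ i, IsLinearOrder (Fin L) (le i))
    (f : (Fin k → Fin L) → F)
    (hanti : ∀ x ∈ {x : Fin k → Fin L | f x ≠ 0}, ∀ y ∈ {x : Fin k → Fin L | f x ≠ 0},
      (∀ i, le i (x i) (y i)) → x = y) :
    sliceRank f = sInf {N : ℕ | ∃ S : Fin k → Set (Fin k → Fin L),
      (⋃ i, S i) = {x : Fin k → Fin L | f x ≠ 0} ∧
      N = ∑ i, Set.ncard ((fun x => x i) '' S i)} :=
  stmt_6_general le hle f hanti
end

section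
/- Fix a prime $p$, integers $m\ge 1$, $k\ge 2m+1$, $n\ge 0$, coefficients $a_{j,i}\in\mathbb{F}_p$ and constants $b_j\in\mathbb{F}_p^n$ for $j\in[m]$, $i\in[k]$. For any integer $L\ge 1$ and vectors $x_i^{(\ell)}\in\mathbb{F}_p^n$ ($i\in[k]$, $\ell\in[L]$), the function $f:[L]^k\to\mathbb{F}_p$ defined by $f(\ell_1,\dots,\ell_k)=1$ if $\sum_{i=1}^k a_{j,i}x_i^{(\ell_i)}=b_j$ for all $j\in[m]$, and $f(\ell_1,\dots,\ell_k)=0$ otherwise, has slice rank at most $k\cdot(\Gamma_{p,m,k})^n$, where $\Gamma_{p,m,k}=\min_{0<z\le 1}\frac{1+z+\dots+z^{p-1}}{z^{(p-1)m/k}}$. -/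
/-- The constant `Γ_{p,m,k} = min_{0 < z ≤ 1} (1 + z + … + z^{p-1}) / z^{(p-1)m/k}`. -/
noncomputable def Gamma (p m k : ℕ) : ℝ :=
  sInf ((fun z : ℝ => (∑ i ∈ Finset.range p, z ^ i) / z ^ (((p - 1 : ℕ) * m : ℝ) / k))
    '' Set.Ioc (0 : ℝ) 1)


-- ========== auxiliary lemmas ==========
set_option maxHeartbeats 1000000


-- exponent reduction
def redExp (p e : ℕ) : ℕ := if e = 0 then 0 else (e - 1) % (p - 1) + 1

lemma redExp_le_self (p e : ℕ) (hp : 2 ≤ p) : redExp p e ≤ e := by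
  unfold redExp
  split
  · omega
  · have h1 : 1 ≤ p - 1 := by omega
    have := Nat.mod_le (e - 1) (p - 1)
    omega

lemma redExp_lt (p e : ℕ) (hp : 2 ≤ p) : redExp p e < p := by
  unfold redExp
  split
  · omega
  · have := Nat.mod_lt (e - 1) (show 0 < p - 1 by omega)
    omega

lemma pow_redExp (p : ℕ) [Fact p.Prime] (c : ZMod p) (e : ℕ) :
    c ^ redExp p e = c ^ e := by
  have hp := (Fact.out : p.Prime).two_le
  unfold redExp
  split
  · subst ‹e = 0›; rfl
  · have he : 1 ≤ e := Nat.one_le_iff_ne_zero.mpr ‹e ≠ 0›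
    -- e = ((e-1) % (p-1) + 1) + ((e-1)/(p-1)) * (p-1)
    have key : ∀ d r : ℕ, 1 ≤ r → c ^ (r + d * (p - 1)) = c ^ r := by
      intro d
      induction d with
      | zero => simp
      | succ d ih =>
        intro r hr
        have : r + (d + 1) * (p - 1) = (r + d * (p-1)) + (p - 1) := by ring
        rw [this, pow_add, ih r hr]
        rcases eq_or_ne c 0 with rfl | hc
        · simp [zero_pow (show r ≠ 0 by omega)]
        · rw [ZMod.pow_card_sub_one_eq_one hc, mul_one]
    have hdecomp : e = ((e - 1) % (p - 1) + 1) + ((e - 1) / (p - 1)) * (p - 1) := by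
      have := Nat.mod_add_div' (e - 1) (p - 1)
      omega
    conv_rhs => rw [hdecomp]
    rw [key _ _ (by omega)]

open Finset in
lemma sliceRank_le_of_decomp {k L : ℕ} {F : Type*} [Field F] {ι : Type*} [DecidableEq ι]
    (Q : Finset ι) (idx : ι → Fin k)
    (g : ι → Fin L → F)
    (h : ∀ q : ι, ({j : Fin k // j ≠ idx q} → Fin L) → F)
    (f : (Fin k → Fin L) → F)
    (hf : ∀ ℓ, f ℓ = ∑ q ∈ Q, g q (ℓ (idx q)) * h q (fun j => ℓ j.1)) :
    sliceRank f ≤ Q.card := by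
  classical
  set Q' : Finset ι := Q.filter (fun q => g q ≠ 0 ∧ h q ≠ 0) with hQ'
  have hf' : ∀ ℓ, f ℓ = ∑ q ∈ Q', g q (ℓ (idx q)) * h q (fun j => ℓ j.1) := by
    intro ℓ
    rw [hf ℓ, hQ', Finset.sum_filter_of_ne]
    intro q _ hne
    constructor
    · intro h0; apply hne; rw [h0]; simp
    · intro h0; apply hne; rw [h0]; simp
  have hmem : sliceRank f ≤ Q'.card := by
    apply Nat.sInf_le
    refine ⟨fun t ℓ =>
      g (Q'.equivFin.symm t : ι) (ℓ (idx (Q'.equivFin.symm t : ι))) *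
        h (Q'.equivFin.symm t : ι) (fun j => ℓ j.1), ?_, ?_⟩
    · intro t
      obtain ⟨hQ, hg, hh⟩ := Finset.mem_filter.mp (Q'.equivFin.symm t).2
      exact ⟨idx _, g _, h _, hg, hh, fun ℓ => rfl⟩
    · intro ℓ
      rw [hf' ℓ, ← Finset.sum_attach Q' (fun q => g q (ℓ (idx q)) * h q (fun j => ℓ j.1))]
      exact (Equiv.sum_comp Q'.equivFin.symm _).symm
  exact hmem.trans (Finset.card_filter_le _ _)

open Finset Real

lemma count_le_Gamma_pow (p m k n : ℕ) [Fact p.Prime] (hk : 1 ≤ k) :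
    (((Finset.univ.filter
        (fun μ : Fin n → Fin p => k * (∑ t, (μ t : ℕ)) ≤ (p-1)*m*n)).card : ℝ))
      ≤ (Gamma p m k) ^ n := by
  have hp := (Fact.out : p.Prime).two_le
  set B := Finset.univ.filter
    (fun μ : Fin n → Fin p => k * (∑ t, (μ t : ℕ)) ≤ (p-1)*m*n) with hB
  set E : ℝ := (((p - 1 : ℕ) : ℝ) * m) / k with hE
  set Fz : ℝ → ℝ := fun z => (∑ i ∈ Finset.range p, z ^ i) / z ^ E with hFz
  have hGamma : Gamma p m k = sInf (Fz '' Set.Ioc 0 1) := rfl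
  have hne : (Fz '' Set.Ioc 0 1).Nonempty := ⟨Fz 1, ⟨1, by norm_num, rfl⟩⟩
  -- key pointwise estimate
  have key : ∀ z ∈ Set.Ioc (0:ℝ) 1, (B.card : ℝ) ≤ (Fz z) ^ n := by
    rintro z ⟨hz0, hz1⟩
    have hzE : (0:ℝ) < z ^ E := Real.rpow_pos_of_pos hz0 E
    have hA : (0:ℝ) < ∑ i ∈ Finset.range p, z ^ i := by
      apply Finset.sum_pos (fun i _ => pow_pos hz0 i)
      exact ⟨0, Finset.mem_range.mpr (by omega)⟩
    have hchain : (B.card : ℝ) * z ^ (E * n) ≤ (∑ i ∈ Finset.range p, z ^ i) ^ n := by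
      have h1 : (B.card : ℝ) * z ^ (E * n) = ∑ _μ ∈ B, z ^ (E * n) := by
        rw [Finset.sum_const, nsmul_eq_mul]
      rw [h1]
      have h2 : ∀ μ ∈ B, z ^ (E * n) ≤ ∏ t, z ^ (μ t : ℕ) := by
        intro μ hμ
        have hμ' : k * (∑ t, (μ t : ℕ)) ≤ (p-1)*m*n := (Finset.mem_filter.mp hμ).2
        have hexp : ((∑ t, (μ t : ℕ) : ℕ) : ℝ) ≤ E * n := by
          have hcast : ((k * (∑ t, (μ t : ℕ)) : ℕ) : ℝ) ≤ (((p-1)*m*n : ℕ) : ℝ) := by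
            exact_mod_cast hμ'
          push_cast at hcast
          rw [hE, div_mul_eq_mul_div, le_div_iff₀ (by exact_mod_cast hk : (0:ℝ) < k)]
          push_cast
          nlinarith [hcast]
        calc z ^ (E * n) ≤ z ^ ((∑ t, (μ t : ℕ) : ℕ) : ℝ) :=
              Real.rpow_le_rpow_of_exponent_ge hz0 hz1 hexp
          _ = z ^ (∑ t, (μ t : ℕ)) := Real.rpow_natCast z _
          _ = ∏ t, z ^ (μ t : ℕ) := by rw [Finset.prod_pow_eq_pow_sum]
      calc ∑ _μ ∈ B, z ^ (E * n) ≤ ∑ μ ∈ B, ∏ t, z ^ (μ t : ℕ) := Finset.sum_le_sum h2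
        _ ≤ ∑ μ : Fin n → Fin p, ∏ t, z ^ (μ t : ℕ) := by
            apply Finset.sum_le_sum_of_subset_of_nonneg (Finset.filter_subset _ _)
            intro μ _ _
            exact Finset.prod_nonneg (fun t _ => pow_nonneg hz0.le _)
        _ = (∑ e : Fin p, z ^ (e : ℕ)) ^ n := (Fintype.sum_pow (fun e : Fin p => z ^ (e:ℕ)) n).symm
        _ = (∑ i ∈ Finset.range p, z ^ i) ^ n := by
            rw [Fin.sum_univ_eq_sum_range (fun i => z ^ i) p]
    have hzEn : z ^ (E * n) = (z ^ E) ^ n := by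
      rw [← Real.rpow_natCast (z ^ E) n, ← Real.rpow_mul hz0.le]
    rw [hFz]
    rw [div_pow, le_div_iff₀ (pow_pos hzE n)]
    calc (B.card : ℝ) * (z ^ E) ^ n = (B.card : ℝ) * z ^ (E * n) := by rw [hzEn]
      _ ≤ _ := hchain
  rcases Nat.eq_zero_or_pos n with rfl | hn
  · simp only [pow_zero]
    have : B.card ≤ 1 := by
      calc B.card ≤ (Finset.univ : Finset (Fin 0 → Fin p)).card := Finset.card_filter_le _ _
        _ = 1 := by simp
    exact_mod_cast this
  · -- n ≥ 1
    have hc0 : (0:ℝ) ≤ (B.card : ℝ) := Nat.cast_nonneg _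
    have haux : ∀ s ∈ Fz '' Set.Ioc (0:ℝ) 1, (B.card : ℝ) ^ ((n:ℝ)⁻¹) ≤ s := by
      rintro s ⟨z, hz, rfl⟩
      have hs0 : (0:ℝ) ≤ Fz z := by
        have hzE : (0:ℝ) < z ^ E := Real.rpow_pos_of_pos hz.1 E
        have hA : (0:ℝ) ≤ ∑ i ∈ Finset.range p, z ^ i :=
          Finset.sum_nonneg (fun i _ => pow_nonneg hz.1.le i)
        exact div_nonneg hA hzE.le
      have := Real.rpow_le_rpow hc0 (key z hz) (by positivity : (0:ℝ) ≤ (n:ℝ)⁻¹)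
      rwa [← Real.rpow_natCast (Fz z) n, ← Real.rpow_mul hs0,
        mul_inv_cancel₀ (by exact_mod_cast hn.ne' : (n:ℝ) ≠ 0), Real.rpow_one] at this
    have hΓ : (B.card : ℝ) ^ ((n:ℝ)⁻¹) ≤ Gamma p m k := by
      rw [hGamma]; exact le_csInf hne haux
    have hid : ((B.card : ℝ) ^ ((n:ℝ)⁻¹)) ^ n = (B.card : ℝ) := by
      rw [← Real.rpow_natCast ((B.card : ℝ) ^ ((n:ℝ)⁻¹)) n, ← Real.rpow_mul hc0,
        inv_mul_cancel₀ (by exact_mod_cast hn.ne' : (n:ℝ) ≠ 0), Real.rpow_one]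
    calc (B.card : ℝ) = ((B.card : ℝ) ^ ((n:ℝ)⁻¹)) ^ n := hid.symm
      _ ≤ (Gamma p m k) ^ n := by
          apply pow_le_pow_left₀ (Real.rpow_nonneg hc0 _) hΓ


open Finset MvPolynomial in
/-- Croot–Lev–Pach, Tao: the indicator tensor of solutions to a linear system
of `m` equations in `k ≥ 2m+1` variables over `𝔽_p` with constants in `𝔽_p^n` has slice
rank at most `k · Γ_{p,m,k}^n`. -/
theorem stmt_8 (p m k n L : ℕ) [Fact p.Prime] (hm : 1 ≤ m) (hk : 2 * m + 1 ≤ k)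
    (hL : 1 ≤ L)
    (a : Fin m → Fin k → ZMod p) (b : Fin m → (Fin n → ZMod p))
    (x : Fin k → Fin L → (Fin n → ZMod p))
    (f : (Fin k → Fin L) → ZMod p)
    (hf1 : ∀ ℓ : Fin k → Fin L,
      (∀ j : Fin m, ∑ i : Fin k, a j i • x i (ℓ i) = b j) → f ℓ = 1)
    (hf0 : ∀ ℓ : Fin k → Fin L,
      ¬ (∀ j : Fin m, ∑ i : Fin k, a j i • x i (ℓ i) = b j) → f ℓ = 0) :
    (sliceRank f : ℝ) ≤ (k : ℝ) * (Gamma p m k) ^ n := by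
  classical
  have hp := (Fact.out : p.Prime).two_le
  set P : MvPolynomial (Fin k × Fin n) (ZMod p) :=
    ∏ j : Fin m, ∏ t : Fin n,
      (1 - (∑ i : Fin k, C (a j i) * X (i, t) - C (b j t)) ^ (p - 1)) with hP
  -- evaluation
  have heval : ∀ ℓ : Fin k → Fin L,
      eval (fun s : (Fin k × Fin n) => x s.1 (ℓ s.1) s.2) P = f ℓ := by
    intro ℓ
    have h1 : eval (fun s : (Fin k × Fin n) => x s.1 (ℓ s.1) s.2) P =
        ∏ j : Fin m, ∏ t : Fin n,
          (1 - ((∑ i : Fin k, a j i * x i (ℓ i) t) - b j t) ^ (p - 1)) := by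
      simp [hP, map_prod, map_sub, map_pow, map_sum, map_mul, eval_C, eval_X]
    have hfac : ∀ c : ZMod p, (1 : ZMod p) - c ^ (p - 1) = if c = 0 then 1 else 0 := by
      intro c
      split_ifs with hc
      · subst hc; rw [zero_pow (by omega : p - 1 ≠ 0), sub_zero]
      · rw [ZMod.pow_card_sub_one_eq_one hc, sub_self]
    rw [h1]
    simp_rw [hfac]
    simp_rw [Fintype.prod_boole]
    have hcond : (∀ (j : Fin m) (t : Fin n), (∑ i : Fin k, a j i * x i (ℓ i) t) - b j t = 0)
        ↔ (∀ j : Fin m, ∑ i : Fin k, a j i • x i (ℓ i) = b j) := by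
      constructor
      · intro H j
        funext t
        have := sub_eq_zero.mp (H j t)
        simpa using this
      · intro H j t
        rw [sub_eq_zero]
        have := congrFun (H j) t
        simpa using this
    by_cases hc : ∀ (j : Fin m) (t : Fin n), (∑ i : Fin k, a j i * x i (ℓ i) t) - b j t = 0
    · rw [hf1 ℓ (hcond.mp hc)]
      exact Finset.prod_eq_one (fun j _ => if_pos (hc j))
    · push_neg at hc
      obtain ⟨j, t, hjt⟩ := hc
      rw [hf0 ℓ (fun hcc => hjt ((hcond.mpr hcc) j t))]
      exact Finset.prod_eq_zero (Finset.mem_univ j) (if_neg (fun hall => hjt (hall t)))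
  -- total degree
  have htd : P.totalDegree ≤ (p - 1) * m * n := by
    calc P.totalDegree ≤ ∑ j : Fin m, (∏ t : Fin n,
          (1 - (∑ i : Fin k, C (a j i) * X ((i, t) : (Fin k × Fin n)) - C (b j t)) ^ (p - 1))).totalDegree :=
        totalDegree_finset_prod _ _
      _ ≤ ∑ _j : Fin m, ∑ _t : Fin n, (p - 1) := by
          apply Finset.sum_le_sum
          intro j _
          calc _ ≤ ∑ t : Fin n,
              ((1 : MvPolynomial (Fin k × Fin n) (ZMod p))
                - (∑ i : Fin k, C (a j i) * X ((i, t) : (Fin k × Fin n)) - C (b j t)) ^ (p - 1)).totalDegree :=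
              totalDegree_finset_prod _ _
            _ ≤ ∑ _t : Fin n, (p - 1) := by
              apply Finset.sum_le_sum
              intro t _
              calc ((1 : MvPolynomial (Fin k × Fin n) (ZMod p))
                    - (∑ i : Fin k, C (a j i) * X ((i, t) : (Fin k × Fin n)) - C (b j t)) ^ (p - 1)).totalDegree
                  ≤ max (1 : MvPolynomial (Fin k × Fin n) (ZMod p)).totalDegree
                    ((∑ i : Fin k, C (a j i) * X ((i, t) : (Fin k × Fin n)) - C (b j t)) ^ (p - 1)).totalDegree :=
                    totalDegree_sub _ _
                _ ≤ p - 1 := by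
                  rw [totalDegree_one, max_le_iff]
                  refine ⟨Nat.zero_le _, ?_⟩
                  calc ((∑ i : Fin k, C (a j i) * X ((i, t) : (Fin k × Fin n)) - C (b j t)) ^ (p - 1)).totalDegree
                      ≤ (p - 1) *
                        (∑ i : Fin k, C (a j i) * X ((i, t) : (Fin k × Fin n)) - C (b j t)).totalDegree :=
                        totalDegree_pow _ _
                    _ ≤ (p - 1) * 1 := by
                        apply Nat.mul_le_mul_left
                        calc (∑ i : Fin k, C (a j i) * X ((i, t) : (Fin k × Fin n)) - C (b j t)).totalDegree
                            ≤ max (∑ i : Fin k, C (a j i) * X ((i, t) : (Fin k × Fin n))).totalDegree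
                              (C (b j t) : MvPolynomial (Fin k × Fin n) (ZMod p)).totalDegree :=
                              totalDegree_sub _ _
                          _ ≤ 1 := by
                            rw [totalDegree_C, max_le_iff]
                            refine ⟨?_, Nat.zero_le _⟩
                            apply totalDegree_finsetSum_le
                            rintro i -
                            calc (C (a j i) * X ((i, t) : (Fin k × Fin n))).totalDegree
                                ≤ (C (a j i) : MvPolynomial (Fin k × Fin n) (ZMod p)).totalDegree
                                  + (X ((i, t) : (Fin k × Fin n)) : MvPolynomial (Fin k × Fin n) (ZMod p)).totalDegree :=
                                  totalDegree_mul _ _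
                              _ ≤ 0 + 1 := by
                                  gcongr
                                  · exact le_of_eq (totalDegree_C _)
                                  · exact le_of_eq (totalDegree_X _)
                    _ = p - 1 := by ring
      _ = m * (n * (p - 1)) := by simp [Finset.sum_const, mul_comm]
      _ = (p - 1) * m * n := by ring
  -- monomial expansion with reduced exponents
  set y : (Fin k → Fin L) → (Fin k × Fin n) → ZMod p := fun ℓ s => x s.1 (ℓ s.1) s.2 with hy
  set redmap : ((Fin k × Fin n) →₀ ℕ) → ((Fin k × Fin n) → Fin p) := fun d s => ⟨redExp p (d s), redExp_lt p (d s) hp⟩ with hredmap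
  set A : Finset ((Fin k × Fin n) → Fin p) :=
    Finset.univ.filter (fun M => ∑ s : (Fin k × Fin n), (M s : ℕ) ≤ (p-1)*m*n) with hA
  have hmapA : ∀ d ∈ P.support, redmap d ∈ A := by
    intro d hd
    rw [hA, Finset.mem_filter]
    refine ⟨Finset.mem_univ _, ?_⟩
    calc ∑ s : (Fin k × Fin n), ((redmap d s : ℕ)) ≤ ∑ s : (Fin k × Fin n), d s :=
          Finset.sum_le_sum (fun s _ => redExp_le_self p (d s) hp)
      _ = d.sum (fun _ e => e) := (Finsupp.sum_fintype d (fun _ e => e) (fun _ => rfl)).symm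
      _ ≤ P.totalDegree := le_totalDegree hd
      _ ≤ (p-1)*m*n := htd
  set c : ((Fin k × Fin n) → Fin p) → ZMod p :=
    fun M => ∑ d ∈ P.support.filter (fun d => redmap d = M), P.coeff d with hcdef
  have hexp2 : ∀ ℓ, f ℓ = ∑ M ∈ A, c M * ∏ s : (Fin k × Fin n), (y ℓ s) ^ (M s : ℕ) := by
    intro ℓ
    rw [← heval ℓ, eval_eq']
    have h2 : ∀ d ∈ P.support, P.coeff d * ∏ s : (Fin k × Fin n), (y ℓ s) ^ (d s) =
        P.coeff d * ∏ s : (Fin k × Fin n), (y ℓ s) ^ ((redmap d s : ℕ)) := by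
      intro d _
      congr 1
      exact Finset.prod_congr rfl (fun s _ => (pow_redExp p (y ℓ s) (d s)).symm)
    rw [Finset.sum_congr rfl h2,
      ← Finset.sum_fiberwise_of_maps_to hmapA
        (fun d => P.coeff d * ∏ s : (Fin k × Fin n), (y ℓ s) ^ ((redmap d s : ℕ)))]
    apply Finset.sum_congr rfl
    intro M hM
    rw [hcdef, Finset.sum_mul]
    apply Finset.sum_congr rfl
    intro d hd
    obtain ⟨-, hdM⟩ := Finset.mem_filter.mp hd
    rw [hdM]
  -- pigeonhole: choose a light coordinate
  have hk0 : 0 < k := by omega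
  have hmin : ∀ M : (Fin k × Fin n) → Fin p,
      ∃ i : Fin k, k * (∑ t : Fin n, (M (i, t) : ℕ)) ≤ ∑ s : (Fin k × Fin n), (M s : ℕ) := by
    intro M
    obtain ⟨i, -, hi⟩ := Finset.exists_min_image Finset.univ
      (fun i : Fin k => ∑ t : Fin n, (M (i, t) : ℕ)) ⟨⟨0, hk0⟩, Finset.mem_univ _⟩
    refine ⟨i, ?_⟩
    calc k * (∑ t : Fin n, (M (i,t):ℕ)) = ∑ _i' : Fin k, (∑ t : Fin n, (M (i,t):ℕ)) := by
          rw [Finset.sum_const, Finset.card_univ, Fintype.card_fin, smul_eq_mul]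
      _ ≤ ∑ i' : Fin k, ∑ t : Fin n, (M (i',t):ℕ) :=
          Finset.sum_le_sum (fun i' _ => hi i' (Finset.mem_univ _))
      _ = ∑ s : (Fin k × Fin n), (M s:ℕ) := (Fintype.sum_prod_type (fun s : Fin k × Fin n => (M s : ℕ))).symm
  choose i0 hi0 using hmin
  -- the slice decomposition
  set B : Finset (Fin n → Fin p) :=
    Finset.univ.filter (fun μ : Fin n → Fin p => k * (∑ t, (μ t : ℕ)) ≤ (p-1)*m*n) with hB
  set Q : Finset (Fin k × (Fin n → Fin p)) := Finset.univ ×ˢ B with hQ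
  set φ : ((Fin k × Fin n) → Fin p) → Fin k × (Fin n → Fin p) :=
    fun M => (i0 M, fun t => M (i0 M, t)) with hφ
  have hmapQ : ∀ M ∈ A, φ M ∈ Q := by
    intro M hM
    rw [hQ, Finset.mem_product]
    refine ⟨Finset.mem_univ _, ?_⟩
    rw [hB, Finset.mem_filter]
    exact ⟨Finset.mem_univ _, le_trans (hi0 M) ((Finset.mem_filter.mp hM).2)⟩
  set G : Fin k × (Fin n → Fin p) → Fin L → ZMod p :=
    fun q ℓi => ∏ t : Fin n, (x q.1 ℓi t) ^ ((q.2 t : ℕ)) with hG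
  set H : ∀ q : Fin k × (Fin n → Fin p), ({j : Fin k // j ≠ q.1} → Fin L) → ZMod p :=
    fun q w => ∑ M ∈ A.filter (fun M => φ M = q),
      c M * ∏ j : {j : Fin k // j ≠ q.1}, ∏ t : Fin n, (x j.1 (w j) t) ^ ((M (j.1, t) : ℕ))
    with hH
  have hdecomp : ∀ ℓ, f ℓ = ∑ q ∈ Q, G q (ℓ q.1) * H q (fun j => ℓ j.1) := by
    intro ℓ
    rw [hexp2 ℓ,
      ← Finset.sum_fiberwise_of_maps_to hmapQ
        (fun M => c M * ∏ s : (Fin k × Fin n), (y ℓ s) ^ (M s : ℕ))]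
    apply Finset.sum_congr rfl
    intro q hq
    rw [hH]
    simp only
    rw [Finset.mul_sum]
    apply Finset.sum_congr rfl
    intro M hM
    obtain ⟨hMA, hMq⟩ := Finset.mem_filter.mp hM
    subst hMq
    have hsplit : ∏ s : (Fin k × Fin n), (y ℓ s) ^ (M s : ℕ) =
        (∏ t : Fin n, (y ℓ (i0 M, t)) ^ (M (i0 M, t) : ℕ)) *
          ∏ j : {j : Fin k // j ≠ i0 M}, ∏ t : Fin n, (y ℓ (j.1, t)) ^ (M (j.1, t) : ℕ) := by
      rw [Fintype.prod_prod_type (fun s : (Fin k × Fin n) => (y ℓ s) ^ (M s : ℕ)),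
        Fintype.prod_eq_mul_prod_compl (i0 M)
          (fun i => ∏ t : Fin n, (y ℓ (i,t)) ^ (M (i,t):ℕ))]
      congr 1
      exact Finset.prod_subtype _ (by simp) _
    rw [hsplit, hG, hy]
    simp only
    ring
  have hsr : sliceRank f ≤ Q.card := sliceRank_le_of_decomp Q Prod.fst G H f hdecomp
  have hQcard : Q.card = k * B.card := by
    rw [hQ, Finset.card_product, Finset.card_univ, Fintype.card_fin]
  have hcount := count_le_Gamma_pow p m k n (by omega : 1 ≤ k)
  have hfinal : (sliceRank f : ℝ) ≤ (k : ℝ) * (Gamma p m k) ^ n := by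
    calc (sliceRank f : ℝ) ≤ (Q.card : ℝ) := by exact_mod_cast hsr
      _ = (k : ℝ) * (B.card : ℝ) := by rw [hQcard]; push_cast; ring
      _ ≤ (k : ℝ) * (Gamma p m k) ^ n := by
          apply mul_le_mul_of_nonneg_left _ (by positivity)
          exact hcount
  exact hfinal
end

section
/- Fix a prime $p$ and integers $m\ge 1$, $k\ge 2m+1$, and let $\Gamma_{p,m,k}=\min_{0<z\le 1}\frac{1+z+\dots+z^{p-1}}{z^{(p-1)m/k}}$. Let $a_{j,i}\in\mathbb{F}_p$ ($j\in[m]$, $i\in[k]$) satisfy $\sum_{i=1}^k a_{j,i}=0$ for each $j$. Then for any $n\ge 0$, every subset $A\subseteq\mathbb{F}_p^n$ with $|A|>(\Gamma_{p,m,k})^n$ contains a solution $(x_1,\dots,x_k)\in A^k$ to the system $\sum_{i=1}^k a_{j,i}x_i=0$ (for all $j\in[m]$) with $x_1,\dots,x_k$ not all equal. -/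
/-!
Slice rank (Tao). Call a function of `x ∈ αᵏ` a slice if it is `f(xᵢ) · g(x without xᵢ)`. If a
diagonal tensor with `s` nonzero diagonal entries is a sum of `r` slices, then `s ≤ r`: pick a
vector `h`, supported on the diagonal, orthogonal to the `f`'s of the slices in the last variable
and with at least `s - #(those slices)` nonzero entries, contract the last variable against `h`,
and induct on `k`.

If `A ⊆ 𝔽_qⁿ` contains only constant solutions, then on `Aᵏ` the polynomial
`∏_{j,l} (1 - (∑ᵢ a_{j,i} x_{i,l})^{q-1})` of degree `D = m n (q-1)` is the diagonal tensor with
all diagonal entries equal to one, because the rows of `a` sum to zero. Assign each monomial to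
the block `xᵢ` in which its degree is least, at most `D / k`. After reducing exponents below `q`,
the polynomial is a sum of `k · #{e ∈ [0,q)ⁿ : ∑ e ≤ D/k}` slices. Comparing with
`(1 + z + ⋯ + z^{q-1})ⁿ` bounds this count by `Γⁿ`. The tensor power trick (apply the bound to
`Aᵗ ⊆ 𝔽_q^{tn}`) removes the factor `k`.
-/

open Finset Module MvPolynomial Filter Topology

theorem Fin.removeNth_castSucc_snoc {α : Type*} {n : ℕ} (j : Fin (n + 1)) (y : Fin (n + 1) → α)
    (b : α) : removeNth j.castSucc (snoc y b : Fin (n + 2) → α) = snoc (removeNth j y) b := by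
  ext i
  induction i using Fin.lastCases with
  | last => simp [removeNth_apply]
  | cast i => simp [removeNth_apply]

section LinearAlgebra

variable {K β : Type*} [Field K] [DecidableEq K] [Fintype β]

theorem Submodule.exists_mem_finrank_le_card_support (H : Submodule K (β → K)) :
    ∃ h ∈ H, finrank K H ≤ #{b | h b ≠ 0} := by
  classical
  -- For a minimal set `T` of coordinates that still determine the vectors of `H`, each `b ∈ T` has
  -- a vector of `H` that is `1` at `b` and `0` on the rest of `T`; their sum is `1` on all of `T`.
  let restrict (T : Finset β) : H →ₗ[K] (T → K) :=
    (LinearMap.funLeft K K ((↑) : T → β)).comp H.subtype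
  obtain ⟨T, hTmem, hTmin⟩ := Finset.exists_minimal
    (s := {T : Finset β | Function.Injective (restrict T)}) ⟨univ, by
      simp only [mem_filter, mem_univ, true_and]
      intro x y hxy
      ext b
      exact congrFun hxy ⟨b, mem_univ b⟩⟩
  have hinj : Function.Injective (restrict T) := (mem_filter.1 hTmem).2
  have hpivot : ∀ b : T, ∃ g ∈ H, g b = 1 ∧ ∀ b' ∈ T, b' ≠ b → g b' = 0 := by
    rintro ⟨b, hb⟩
    have hnot : ¬ Function.Injective (restrict (T.erase b)) := fun h =>
      notMem_erase b T (hTmin (by simpa using h) (erase_subset b T) hb)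
    rw [← LinearMap.ker_eq_bot] at hnot
    obtain ⟨g, hg, hg0⟩ := Submodule.exists_mem_ne_zero_of_ne_bot hnot
    have hvanish : ∀ b' ∈ T, b' ≠ b → (g : β → K) b' = 0 := fun b' hb' hne =>
      congrFun (LinearMap.mem_ker.1 hg) ⟨b', mem_erase.2 ⟨hne, hb'⟩⟩
    have hgb : (g : β → K) b ≠ 0 := by
      refine fun hgb => hg0 (hinj ?_)
      ext ⟨b', hb'⟩
      by_cases hbb : b' = b
      · subst hbb; simpa [restrict] using hgb
      · simpa [restrict] using hvanish b' hb' hbb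
    refine ⟨((g : β → K) b)⁻¹ • (g : β → K), H.smul_mem _ g.2, by simp [hgb], ?_⟩
    intro b' hb' hne
    simp [hvanish b' hb' hne]
  choose g hgH hgb hgz using hpivot
  refine ⟨∑ b, g b, H.sum_mem fun b _ => hgH b, ?_⟩
  have hone : ∀ b : T, (∑ b', g b') b = 1 := by
    intro b
    rw [Finset.sum_apply, Finset.sum_eq_single b (fun b' _ hne => hgz b' b b.2
      (fun h => hne (Subtype.ext h).symm)) (by simp), hgb]
  calc finrank K H ≤ finrank K (T → K) := LinearMap.finrank_le_finrank_of_injective hinj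
    _ = #T := by simp
    _ ≤ _ := card_le_card fun b hb => by
      simp only [mem_filter, mem_univ, true_and]
      exact (hone ⟨b, hb⟩).symm ▸ one_ne_zero

theorem exists_supported_orthogonal {τ : Type*} [Fintype τ] (S : Finset β) (f : τ → β → K) :
    ∃ h : β → K, (∀ b ∉ S, h b = 0) ∧ (∀ t, f t ⬝ᵥ h = 0) ∧
      #S ≤ #{b | h b ≠ 0} + Fintype.card τ := by
  classical
  let Ψ : (β → K) →ₗ[K] ((Sᶜ : Finset β) → K) × (τ → K) :=
    (LinearMap.funLeft K K ((↑) : (Sᶜ : Finset β) → β)).prod (Matrix.mulVecLin (Matrix.of f))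
  obtain ⟨h, hker, hcard⟩ := (LinearMap.ker Ψ).exists_mem_finrank_le_card_support
  have hΨ := (Prod.ext_iff.1 (LinearMap.mem_ker.1 hker))
  refine ⟨h, fun b hb => congrFun hΨ.1 ⟨b, mem_compl.2 hb⟩, fun t => congrFun hΨ.2 t, ?_⟩
  have hrank := LinearMap.finrank_range_add_finrank_ker Ψ
  have hrange : finrank K (LinearMap.range Ψ) ≤ Fintype.card β - #S + Fintype.card τ := by
    simpa using (LinearMap.range Ψ).finrank_le
  simp only [finrank_fintype_fun_eq_card] at hrank
  have := S.card_le_univ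
  omega

end LinearAlgebra

section Slices

variable {α β K : Type*} [Field K]

def IsSliceAt {n : ℕ} (i : Fin (n + 1)) (F : (Fin (n + 1) → α) → K) : Prop :=
  ∃ (f : α → K) (g : (Fin n → α) → K), ∀ x, F x = f (x i) * g (i.removeNth x)

theorem IsSliceAt.comp {n : ℕ} {i : Fin (n + 1)} {F : (Fin (n + 1) → α) → K}
    (hF : IsSliceAt i F) (φ : β → α) : IsSliceAt i fun x => F (φ ∘ x) := by
  obtain ⟨f, g, hfg⟩ := hF
  exact ⟨f ∘ φ, fun z => g (φ ∘ z), fun x => hfg (φ ∘ x)⟩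

theorem IsSliceAt.one_of_zero {F : (Fin 2 → α) → K} (hF : IsSliceAt 0 F) : IsSliceAt 1 F := by
  obtain ⟨f, g, hfg⟩ := hF
  refine ⟨fun b => g fun _ => b, fun z => f (z 0), fun x => ?_⟩
  rw [hfg, mul_comm]
  congr 2
  ext i
  fin_cases i
  rfl

variable [DecidableEq α]

def diagTensor {n : ℕ} (c : α → K) (x : Fin (n + 1) → α) : K :=
  if ∀ i, x i = x 0 then c (x 0) else 0

theorem diagTensor_const {n : ℕ} (c : α → K) (a : α) :
    diagTensor c (fun _ : Fin (n + 1) => a) = c a := by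
  simp [diagTensor]

variable [Fintype α]

theorem sum_diagTensor_snoc_mul {n : ℕ} (c h : α → K) (y : Fin (n + 1) → α) :
    ∑ b, diagTensor c (Fin.snoc y b : Fin (n + 2) → α) * h b = diagTensor (c * h) y := by
  have hzero (b : α) : (Fin.snoc y b : Fin (n + 2) → α) 0 = y 0 := Fin.snoc_castSucc (i := 0) ..
  by_cases hy : ∀ i, y i = y 0 <;>
    simp [diagTensor, hzero, Fin.forall_fin_succ', hy, ite_and, eq_comm (b := y 0)]

variable [DecidableEq K]

theorem exists_contract_last {γ : Type*} [DecidableEq γ] {n : ℕ} {c : α → K}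
    {ι ι₁ : Finset γ} {F : γ → (Fin (n + 2) → α) → K} (hsub : ι₁ ⊆ ι)
    (hlast : ∀ s ∈ ι \ ι₁, IsSliceAt (Fin.last (n + 1)) (F s))
    (hrest : ∀ s ∈ ι₁, ∃ j : Fin (n + 1), IsSliceAt j.castSucc (F s))
    (hsum : diagTensor c = ∑ s ∈ ι, F s) :
    ∃ (c' : α → K) (F' : γ → (Fin (n + 1) → α) → K), (∀ s ∈ ι₁, ∃ j, IsSliceAt j (F' s)) ∧
      diagTensor c' = ∑ s ∈ ι₁, F' s ∧ #{a | c a ≠ 0} ≤ #{a | c' a ≠ 0} + #(ι \ ι₁) := by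
  choose! f g hfg using hlast
  obtain ⟨h, hS, horth, hcard⟩ :=
    exists_supported_orthogonal {a | c a ≠ 0} fun s : ↥(ι \ ι₁) => f s
  have hsupp (a : α) : c a * h a ≠ 0 ↔ h a ≠ 0 := by
    refine ⟨right_ne_zero_of_mul, fun ha => mul_ne_zero (fun hc => ha (hS a ?_)) ha⟩
    simpa using hc
  refine ⟨c * h, fun s y => ∑ b, F s (Fin.snoc y b) * h b, fun s hs => ?_, ?_, ?_⟩
  · obtain ⟨j, f', g', hfg'⟩ := hrest s hs
    refine ⟨j, f', fun z => ∑ b, g' (Fin.snoc z b) * h b, fun y => ?_⟩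
    simp [hfg', Fin.removeNth_castSucc_snoc, mul_sum, mul_assoc]
  · funext y
    have hkill : ∀ s ∈ ι \ ι₁, ∑ b, F s (Fin.snoc y b) * h b = 0 := by
      intro s hs
      calc ∑ b, F s (Fin.snoc y b) * h b = g s y * (f s ⬝ᵥ h) := by
            simp [hfg s hs, dotProduct, mul_sum, mul_comm, mul_left_comm]
        _ = 0 := by rw [horth ⟨s, hs⟩, mul_zero]
    rw [← sum_diagTensor_snoc_mul, hsum]
    simp only [Finset.sum_apply, Finset.sum_mul]
    rw [Finset.sum_comm, ← Finset.sum_sdiff hsub, Finset.sum_eq_zero hkill, zero_add]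
  · simpa [hsupp] using hcard

theorem card_support_le_of_diagTensor_eq_sum_slices {γ : Type*} {n : ℕ}
    {c : α → K} {ι : Finset γ} {F : γ → (Fin (n + 2) → α) → K}
    (hF : ∀ s ∈ ι, ∃ i, IsSliceAt i (F s)) (hsum : diagTensor c = ∑ s ∈ ι, F s) :
    #{a | c a ≠ 0} ≤ #ι := by
  classical
  induction n generalizing c ι with
  | zero =>
    have hlast : ∀ s ∈ ι \ ∅, IsSliceAt 1 (F s) := by
      intro s hs
      obtain ⟨i, hi⟩ := hF s (sdiff_subset hs)
      fin_cases i
      exacts [hi.one_of_zero, hi]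
    obtain ⟨c', _, -, hsum', hcard⟩ := exists_contract_last (empty_subset ι) hlast (by simp) hsum
    have hc' (a : α) : c' a = 0 := by simpa [diagTensor_const] using congrFun hsum' fun _ => a
    simpa [hc'] using hcard
  | succ n ih =>
    obtain ⟨ι₁, hsub, hlast, hrest⟩ : ∃ ι₁ ⊆ ι, (∀ s ∈ ι \ ι₁, IsSliceAt (Fin.last _) (F s)) ∧
        ∀ s ∈ ι₁, ∃ j : Fin (n + 2), IsSliceAt j.castSucc (F s) := by
      refine ⟨ι.filter fun s => ∃ j : Fin (n + 2), IsSliceAt j.castSucc (F s), filter_subset _ ι,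
        fun s hs => ?_, fun s hs => (mem_filter.1 hs).2⟩
      obtain ⟨hs, hs₁⟩ := mem_sdiff.1 hs
      obtain ⟨i, hi⟩ := hF s hs
      induction i using Fin.lastCases with
      | last => exact hi
      | cast j => exact absurd (mem_filter.2 ⟨hs, j, hi⟩) hs₁
    obtain ⟨c', F', hF', hsum', hcard⟩ := exists_contract_last hsub hlast hrest hsum
    have := ih hF' hsum'
    have := card_sdiff_add_card_eq_card hsub
    omega

end Slices

theorem argmin_le_div_card_of_sum_le {ι : Type*} [Fintype ι] [Nonempty ι] {f : ι → ℕ} {D : ℕ}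
    (h : ∑ i, f i ≤ D) : f (Function.argmin f) ≤ D / Fintype.card ι := by
  refine (Nat.le_div_iff_mul_le Fintype.card_pos).2 ?_
  calc f (Function.argmin f) * Fintype.card ι = Fintype.card ι • f (Function.argmin f) := by
        rw [smul_eq_mul, mul_comm]
    _ ≤ ∑ i, f i := card_nsmul_le_sum _ _ _ fun i _ => Function.argmin_le f i
    _ ≤ D := h

def boundedExponents (ν : Type*) [Fintype ν] [DecidableEq ν] (q D : ℕ) : Finset (ν → Fin q) :=
  {e | ∑ l, (e l : ℕ) ≤ D}

section FiniteField

variable {K : Type*} [Field K] [Fintype K]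

theorem FiniteField.exists_pow_eq_pow_lt_card (e : ℕ) :
    ∃ r < Fintype.card K, r ≤ e ∧ ∀ c : K, c ^ e = c ^ r := by
  induction e using Nat.strong_induction_on with
  | _ e ih =>
    by_cases he : e < Fintype.card K
    · exact ⟨e, he, le_rfl, fun _ => rfl⟩
    have hq : 1 < Fintype.card K := Fintype.one_lt_card
    obtain ⟨r, hr, hre, hpow⟩ := ih (e - (Fintype.card K - 1)) (by omega)
    refine ⟨r, hr, by omega, fun c => ?_⟩
    calc c ^ e = c ^ (e - Fintype.card K) * c ^ Fintype.card K := by rw [← pow_add]; congr 1; omega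
      _ = c ^ (e - (Fintype.card K - 1)) := by
        rw [FiniteField.pow_card, ← pow_succ]; congr 1; omega
      _ = c ^ r := hpow c

variable {ν : Type*} [Fintype ν] [DecidableEq ν]

theorem exists_eval_eq_sum_slices {k D : ℕ} (P : MvPolynomial (Fin (k + 1) × ν) K)
    (hP : P.totalDegree ≤ D) :
    ∃ G : Fin (k + 1) × (ν → Fin (Fintype.card K)) → (Fin (k + 1) → ν → K) → K,
      (∀ s, IsSliceAt s.1 (G s)) ∧ ∀ x, eval (fun v => x v.1 v.2) P =
        ∑ s ∈ univ ×ˢ boundedExponents ν (Fintype.card K) (D / (k + 1)), G s x := by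
  choose red hred_lt hred_le hred_pow using FiniteField.exists_pow_eq_pow_lt_card (K := K)
  let row (d : (Fin (k + 1) × ν) →₀ ℕ) (i : Fin (k + 1)) : ℕ := ∑ l, d (i, l)
  let σ (d : (Fin (k + 1) × ν) →₀ ℕ) : Fin (k + 1) × (ν → Fin (Fintype.card K)) :=
    (Function.argmin (row d), fun l => ⟨red (d (Function.argmin (row d), l)), hred_lt _⟩)
  let g (s : Fin (k + 1) × (ν → Fin (Fintype.card K))) (z : Fin k → ν → K) : K :=
    ∑ d ∈ P.support with σ d = s, coeff d P * ∏ j, ∏ l, z j l ^ d (s.1.succAbove j, l)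
  refine ⟨fun s x => (∏ l, x s.1 l ^ (s.2 l : ℕ)) * g s (s.1.removeNth x),
    fun s => ⟨fun y => ∏ l, y l ^ (s.2 l : ℕ), g s, fun x => rfl⟩, fun x => ?_⟩
  have hmaps :
      ∀ d ∈ P.support, σ d ∈ univ ×ˢ boundedExponents ν (Fintype.card K) (D / (k + 1)) := by
    intro d hd
    have hdeg : ∑ i, row d i ≤ D := by
      calc ∑ i, row d i = d.sum fun _ e => e := by
            rw [Finsupp.sum_fintype _ _ fun _ => rfl, Fintype.sum_prod_type]
        _ ≤ D := (le_totalDegree hd).trans hP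
    simpa [boundedExponents, σ] using
      (sum_le_sum fun l _ => hred_le _).trans (argmin_le_div_card_of_sum_le hdeg)
  rw [eval_eq', ← sum_fiberwise_of_maps_to hmaps]
  refine sum_congr rfl fun s _ => ?_
  dsimp only [g]
  rw [mul_sum]
  refine sum_congr rfl fun d hd => ?_
  obtain rfl := (mem_filter.1 hd).2
  simp only [σ, Fintype.prod_prod_type, Fin.removeNth_apply, ← hred_pow]
  rw [Fin.prod_univ_succAbove _ (Function.argmin (row d))]
  ring

end FiniteField

def OnlyTrivialSolutions {R V : Type*} [Semiring R] [AddCommMonoid V] [Module R V] {m k : ℕ}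
    (a : Fin m → Fin k → R) (A : Finset V) : Prop :=
  ∀ x : Fin k → V, (∀ i, x i ∈ A) → (∀ j, ∑ i, a j i • x i = 0) → ∀ i i', x i = x i'

section Solutions

variable {K : Type*} [Field K] [Fintype K] (ν : Type*) [Fintype ν] {m k : ℕ}

noncomputable def solutionIndicator (a : Fin m → Fin k → K) : MvPolynomial (Fin k × ν) K :=
  ∏ j, ∏ l : ν, (1 - (∑ i, C (a j i) * X (i, l)) ^ (Fintype.card K - 1))

variable {ν}

theorem totalDegree_solutionIndicator_le (a : Fin m → Fin k → K) :
    (solutionIndicator ν a).totalDegree ≤ m * Fintype.card ν * (Fintype.card K - 1) := by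
  have hlin (j : Fin m) (l : ν) : (∑ i, C (a j i) * X (i, l) : MvPolynomial _ K).totalDegree ≤ 1 :=
    (totalDegree_finsetSum_le fun i _ => (totalDegree_mul _ _).trans (by simp))
  have hfactor (j : Fin m) (l : ν) :
      (1 - (∑ i, C (a j i) * X (i, l)) ^ (Fintype.card K - 1) : MvPolynomial _ K).totalDegree ≤
        Fintype.card K - 1 :=
    (totalDegree_sub _ _).trans <| max_le (by simp) <|
      (totalDegree_pow _ _).trans (by simpa using Nat.mul_le_mul_left _ (hlin j l))
  calc (solutionIndicator ν a).totalDegree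
      ≤ ∑ j, ∑ l : ν, (1 - (∑ i, C (a j i) * X (i, l)) ^ (Fintype.card K - 1) :
          MvPolynomial _ K).totalDegree :=
        (totalDegree_finsetProd _ _).trans (sum_le_sum fun j _ => totalDegree_finsetProd _ _)
    _ ≤ ∑ _j : Fin m, ∑ _l : ν, (Fintype.card K - 1) :=
        sum_le_sum fun j _ => sum_le_sum fun l _ => hfactor j l
    _ = m * Fintype.card ν * (Fintype.card K - 1) := by simp [mul_assoc]

variable [DecidableEq K]

theorem FiniteField.one_sub_pow_card_sub_one (t : K) :
    1 - t ^ (Fintype.card K - 1) = if t = 0 then 1 else 0 := by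
  split_ifs with ht
  · have : 1 < Fintype.card K := Fintype.one_lt_card
    simp [ht, Nat.sub_ne_zero_of_lt this]
  · rw [FiniteField.pow_card_sub_one_eq_one t ht, sub_self]

theorem eval_solutionIndicator (a : Fin m → Fin k → K) (x : Fin k → ν → K) :
    eval (fun v => x v.1 v.2) (solutionIndicator ν a) =
      if ∀ j, ∑ i, a j i • x i = 0 then 1 else 0 := by
  simp only [solutionIndicator, map_prod, map_sub, map_one, map_pow, map_sum, map_mul, eval_C,
    eval_X, FiniteField.one_sub_pow_card_sub_one, prod_boole, mem_univ, true_implies, funext_iff,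
    Finset.sum_apply, Pi.smul_apply, smul_eq_mul, Pi.zero_apply]

variable [DecidableEq ν]

theorem card_le_of_onlyTrivialSolutions {a : Fin m → Fin (k + 2) → K}
    (ha : ∀ j, ∑ i, a j i = 0) {A : Finset (ν → K)} (hA : OnlyTrivialSolutions a A) :
    #A ≤ (k + 2) * #(boundedExponents ν (Fintype.card K)
      (m * Fintype.card ν * (Fintype.card K - 1) / (k + 2))) := by
  obtain ⟨G, hG, hsum⟩ := exists_eval_eq_sum_slices _ (totalDegree_solutionIndicator_le (ν := ν) a)
  have hdiag : diagTensor (fun _ : A => (1 : K)) =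
      ∑ s ∈ univ ×ˢ boundedExponents ν (Fintype.card K)
        (m * Fintype.card ν * (Fintype.card K - 1) / (k + 2)),
        fun x => G s fun i => (x i : ν → K) := by
    funext x
    rw [Finset.sum_apply, ← hsum, eval_solutionIndicator a fun i => (x i : ν → K), diagTensor]
    by_cases hx : ∀ i, x i = x 0
    · have hsol : ∀ j, ∑ i, a j i • (x i : ν → K) = 0 := fun j => by
        simp [hx, ← sum_smul, ha j]
      simp only [if_pos hx, if_pos hsol]
    · have hsol : ¬ ∀ j, ∑ i, a j i • (x i : ν → K) = 0 := fun hsol =>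
        hx fun i => Subtype.ext (hA _ (fun i => (x i).2) hsol i 0)
      simp only [if_neg hx, if_neg hsol]
  have := card_support_le_of_diagTensor_eq_sum_slices
    (fun s _ => ⟨s.1, (hG s).comp Subtype.val⟩) hdiag
  simpa [card_product] using this

end Solutions

section Gamma

variable {q m k : ℕ}

theorem Gamma_nonneg : 0 ≤ Gamma q m k :=
  Real.sInf_nonneg <| by
    rintro _ ⟨z, hz, rfl⟩
    have := hz.1
    positivity

theorem le_Gamma_pow {n : ℕ} {N : ℝ} (hN : 0 ≤ N) (h : ∀ z ∈ Set.Ioc (0 : ℝ) 1,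
    N ≤ ((∑ i ∈ range q, z ^ i) / z ^ (((q - 1 : ℕ) * m : ℝ) / k)) ^ n) :
    N ≤ Gamma q m k ^ n := by
  rcases eq_or_ne n 0 with rfl | hn
  · simpa using h 1 ⟨one_pos, le_rfl⟩
  have hroot : N ^ (n⁻¹ : ℝ) ≤ Gamma q m k := by
    refine le_csInf ⟨_, Set.mem_image_of_mem _ ⟨one_pos, le_rfl⟩⟩ ?_
    rintro _ ⟨z, hz, rfl⟩
    have := hz.1
    rw [Real.rpow_inv_le_iff_of_pos hN (by positivity) (by positivity), Real.rpow_natCast]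
    exact h z hz
  calc N = (N ^ (n⁻¹ : ℝ)) ^ n := (Real.rpow_inv_natCast_pow hN hn).symm
    _ ≤ Gamma q m k ^ n := pow_le_pow_left₀ (by positivity) hroot n

theorem card_boundedExponents_le_Gamma_pow (ν : Type*) [Fintype ν] [DecidableEq ν] :
    (#(boundedExponents ν q (m * Fintype.card ν * (q - 1) / k)) : ℝ) ≤
      Gamma q m k ^ Fintype.card ν := by
  refine le_Gamma_pow (Nat.cast_nonneg _) fun z ⟨hz0, hz1⟩ => ?_
  set α : ℝ := ((q - 1 : ℕ) * m : ℝ) / k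
  have hmono : ∀ e ∈ boundedExponents ν q (m * Fintype.card ν * (q - 1) / k),
      (z ^ α) ^ Fintype.card ν ≤ ∏ l, z ^ (e l : ℕ) := by
    intro e he
    have hsum : ((∑ l, (e l : ℕ) : ℕ) : ℝ) ≤ α * Fintype.card ν := by
      calc ((∑ l, (e l : ℕ) : ℕ) : ℝ) ≤ ((m * Fintype.card ν * (q - 1) / k : ℕ) : ℝ) := by
            exact_mod_cast (mem_filter.1 he).2
        _ ≤ ((m * Fintype.card ν * (q - 1) : ℕ) : ℝ) / k := Nat.cast_div_le
        _ = α * Fintype.card ν := by push_cast [α]; ring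
    rw [prod_pow_eq_pow_sum, ← Real.rpow_mul_natCast hz0.le, ← Real.rpow_natCast z]
    exact Real.rpow_le_rpow_of_exponent_ge hz0 hz1 hsum
  rw [div_pow, le_div_iff₀ (by positivity)]
  calc (#(boundedExponents ν q (m * Fintype.card ν * (q - 1) / k)) : ℝ) * (z ^ α) ^ Fintype.card ν
      = ∑ _e ∈ boundedExponents ν q (m * Fintype.card ν * (q - 1) / k),
          (z ^ α) ^ Fintype.card ν := by rw [sum_const, nsmul_eq_mul]
    _ ≤ ∑ e ∈ boundedExponents ν q (m * Fintype.card ν * (q - 1) / k), ∏ l, z ^ (e l : ℕ) :=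
        sum_le_sum hmono
    _ ≤ ∑ e : ν → Fin q, ∏ l, z ^ (e l : ℕ) :=
        sum_le_sum_of_subset_of_nonneg (subset_univ _) fun _ _ _ => by positivity
    _ = (∑ i ∈ range q, z ^ i) ^ Fintype.card ν := by
        rw [← Fintype.prod_sum fun (_ : ν) (j : Fin q) => z ^ (j : ℕ),
          Fin.sum_univ_eq_sum_range (fun i => z ^ i), prod_const, card_univ]

end Gamma

section CartesianPower

variable {R ν : Type*} (τ : Type*) [Fintype τ] [DecidableEq τ]

def cartesianPower (A : Finset (ν → R)) : Finset (τ × ν → R) :=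
  (Fintype.piFinset fun _ : τ => A).map (Equiv.curry τ ν R).symm.toEmbedding

variable {τ}

theorem mem_cartesianPower {A : Finset (ν → R)} {z : τ × ν → R} :
    z ∈ cartesianPower τ A ↔ ∀ s, (fun l => z (s, l)) ∈ A :=
  mem_map_equiv.trans Fintype.mem_piFinset

theorem card_cartesianPower (A : Finset (ν → R)) :
    #(cartesianPower τ A) = #A ^ Fintype.card τ := by
  simp [cartesianPower]

theorem OnlyTrivialSolutions.cartesianPower [Semiring R] {m k : ℕ} {a : Fin m → Fin k → R}
    {A : Finset (ν → R)} (hA : OnlyTrivialSolutions a A) :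
    OnlyTrivialSolutions a (cartesianPower τ A) := by
  intro x hx hsol i i'
  funext ⟨s, l⟩
  refine congrFun (hA (fun i l => x i (s, l)) (fun i => mem_cartesianPower.1 (hx i) s)
    (fun j => funext fun l => ?_) i i') l
  simpa [Finset.sum_apply] using congrFun (hsol j) (s, l)

end CartesianPower

theorem le_of_forall_pow_le_mul_pow {a b C : ℝ} (hb : 0 ≤ b)
    (h : ∀ t : ℕ, a ^ t ≤ C * b ^ t) : a ≤ b := by
  by_contra! hba
  have ha0 : 0 < a := hb.trans_lt hba
  have hlim : Tendsto (fun t : ℕ => C * (b / a) ^ t) atTop (𝓝 0) := by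
    simpa using (tendsto_pow_atTop_nhds_zero_of_lt_one (by positivity)
      ((div_lt_one ha0).2 hba)).const_mul C
  refine absurd (ge_of_tendsto' hlim fun t => ?_) (not_le.2 one_pos)
  rw [div_pow, ← mul_div_assoc, le_div_iff₀ (by positivity), one_mul]
  exact h t

/-- Tao: for any homogeneous system of `m` equations in `k ≥ 2m+1` variables
over `𝔽_p` whose coefficient rows sum to zero, every `A ⊆ 𝔽_p^n` with `|A| > Γ_{p,m,k}^n`
contains a solution `(x₁,…,x_k) ∈ A^k` with the `x_i` not all equal. -/
theorem stmt_9 (p m k : ℕ) [Fact p.Prime] (hm : 1 ≤ m) (hk : 2 * m + 1 ≤ k)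
    (a : Fin m → Fin k → ZMod p) (ha : ∀ j, ∑ i : Fin k, a j i = 0)
    (n : ℕ) (A : Finset (Fin n → ZMod p)) (hA : ((A.card : ℝ)) > (Gamma p m k) ^ n) :
    ∃ x : Fin k → (Fin n → ZMod p), (∀ i, x i ∈ A) ∧
      (∀ j : Fin m, ∑ i : Fin k, a j i • x i = 0) ∧
      ¬ (∀ i i' : Fin k, x i = x i') := by
  by_contra hno
  have hA' : OnlyTrivialSolutions a A := fun x hx hsol =>
    by_contra fun hne => hno ⟨x, hx, hsol, hne⟩
  obtain ⟨k, rfl⟩ : ∃ k', k = k' + 2 := ⟨k - 2, by omega⟩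
  refine hA.not_ge <|
    le_of_forall_pow_le_mul_pow (C := (k + 2 : ℕ)) (pow_nonneg Gamma_nonneg n) fun t => ?_
  have hcard := card_le_of_onlyTrivialSolutions ha (hA'.cartesianPower (τ := Fin t))
  have hcount := card_boundedExponents_le_Gamma_pow (q := Fintype.card (ZMod p)) (m := m)
    (k := k + 2) (Fin t × Fin n)
  rw [card_cartesianPower] at hcard
  simp only [ZMod.card, Fintype.card_prod, Fintype.card_fin] at hcard hcount
  calc (#A : ℝ) ^ t ≤ (k + 2 : ℕ) * (#(boundedExponents _ _ _) : ℝ) := by exact_mod_cast hcard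
    _ ≤ (k + 2 : ℕ) * Gamma p m (k + 2) ^ (t * n) := by gcongr
    _ = (k + 2 : ℕ) * (Gamma p m (k + 2) ^ n) ^ t := by rw [← pow_mul, mul_comm t]
end

section
/- Let $p$ be a prime, $V$ an $\mathbb{F}_p$-vector space, and $(x_1,\dots,x_k)\in(V\setminus\{0\})^k$ a solution to a homogeneous system $\sum_i a_{j,i}x_i=0$ ($j\in[m]$) whose rows sum to zero. Let $I\subseteq[k]$ be an admissible subset of maximum weight and $U=\operatorname{span}(x_i: i\in I)$. Then there is a partition $[k]\setminus I=J_1\cup\dots\cup J_t$ with $|J_h|\ge 2$ for all $h$, and distinct one-dimensional subspaces $W_1,\dots,W_t\subseteq V/U$, such that $\operatorname{span}(\operatorname{proj}_{V/U}(x_j))=W_h$ for all $h$ and all $j\in J_h$. -/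
/-- A subset `I ⊆ [k]` is admissible for `(x₁,…,x_k)` if the `x_i`, `i ∈ I`, are linearly
independent and `x_j ∉ span(x_i : i ∈ I)` for all `j ∉ I`. -/
def Admissible (p : ℕ) {k : ℕ} {V : Type} [AddCommGroup V] [Module (ZMod p) V]
    (x : Fin k → V) (I : Finset (Fin k)) : Prop :=
  LinearIndependent (ZMod p) (fun i : I => x i.1) ∧
  ∀ j, j ∉ I → x j ∉ Submodule.span (ZMod p) (x '' ↑I)

/-- The weight of an admissible set `I`:
`(k+1)·|I| + |{span(proj_{V/U}(x_j)) : j ∈ [k] \ I}|` where `U = span(x_i : i ∈ I)`. -/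
noncomputable def weight (p : ℕ) {k : ℕ} {V : Type} [AddCommGroup V] [Module (ZMod p) V]
    (x : Fin k → V) (I : Finset (Fin k)) : ℕ :=
  (k + 1) * I.card +
  Set.ncard {W : Submodule (ZMod p) (V ⧸ Submodule.span (ZMod p) (x '' ↑I)) |
    ∃ j, j ∉ I ∧ W = Submodule.span (ZMod p) {Submodule.Quotient.mk (x j)}}

/-- The weight `ω(x₁,…,x_k)`: the maximum weight of an admissible subset. -/
noncomputable def omegaWt (p : ℕ) {k : ℕ} {V : Type} [AddCommGroup V] [Module (ZMod p) V]
    (x : Fin k → V) : ℕ :=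
  sSup {w : ℕ | ∃ I : Finset (Fin k), Admissible p x I ∧ w = weight p x I}

/-!
If some class of `[k] \ I` under `j ↦ span(proj_{V/U}(x_j))` were a singleton `{j₀}`,
then `I ∪ {j₀}` would again be admissible: `x_{j₀} ∉ U` keeps the family independent, and
an `x_j` in `span(U ∪ {x_{j₀}})` would project into the line of `x_{j₀}`, i.e. lie in the
class of `j₀`. The second summand of the weight is at most `k`, so the weight strictly
increases with `|I|`, contradicting maximality.
-/

open Finset Submodule

theorem Finset.exists_fin_fiber_partition {ι β : Type*} [DecidableEq β] (s : Finset ι)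
    (f : ι → β) :
    ∃ (t : ℕ) (J : Fin t → Finset ι) (W : Fin t → β),
      (∀ h h', h ≠ h' → Disjoint (J h) (J h')) ∧ (∀ j, j ∈ s ↔ ∃ h, j ∈ J h) ∧
      Function.Injective W ∧ ∀ h, ∃ j ∈ s, J h = s.filter (f · = f j) ∧ W h = f j := by
  set e := (s.image f).equivFin
  refine ⟨(s.image f).card, fun h => s.filter (f · = e.symm h), fun h => e.symm h,
    fun h h' hne => ?_, fun j => ⟨fun hj => ?_, fun ⟨h, hj⟩ => (mem_filter.1 hj).1⟩,
    fun h h' hW => e.symm.injective (Subtype.ext hW), fun h => ?_⟩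
  · exact disjoint_filter.2 fun j _ hj hj' =>
      hne (e.symm.injective (Subtype.ext (hj.symm.trans hj')))
  · exact ⟨e ⟨f j, mem_image_of_mem f hj⟩, by simp [hj]⟩
  · obtain ⟨j, hj, hfj⟩ := mem_image.1 (e.symm h).2
    exact ⟨j, hj, by rw [hfj], hfj.symm⟩

theorem Submodule.mem_span_insert_iff_mkQ_mem_span_singleton {R M : Type*} [Ring R]
    [AddCommGroup M] [Module R M] (s : Set M) (v w : M) :
    w ∈ span R (insert v s) ↔ (span R s).mkQ w ∈ R ∙ (span R s).mkQ v := by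
  rw [span_insert, sup_comm, ← comap_map_mkQ, mem_comap, map_span, Set.image_singleton]

theorem Submodule.span_singleton_eq_of_mem {K M : Type*} [DivisionRing K] [AddCommGroup M]
    [Module K M] {v w : M} (hv : v ≠ 0) (h : v ∈ K ∙ w) : K ∙ v = K ∙ w := by
  obtain ⟨c, rfl⟩ := mem_span_singleton.1 h
  exact span_singleton_smul_eq (IsUnit.mk0 c (by rintro rfl; simp at hv)) w

variable {p k : ℕ} {V : Type} [AddCommGroup V] [Module (ZMod p) V] {x : Fin k → V}

variable (p x) in
noncomputable def projLine (I : Finset (Fin k)) (j : Fin k) :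
    Submodule (ZMod p) (V ⧸ span (ZMod p) (x '' ↑I)) :=
  span (ZMod p) {Submodule.Quotient.mk (x j)}

theorem ncard_projLines_le (I : Finset (Fin k)) :
    Set.ncard {W | ∃ j, j ∉ I ∧ W = projLine p x I j} ≤ k := by
  calc _ ≤ (Set.range (projLine p x I)).ncard :=
        Set.ncard_le_ncard (by rintro W ⟨j, -, hW⟩; exact ⟨j, hW.symm⟩) (Set.finite_range _)
    _ ≤ (Set.univ : Set (Fin k)).ncard := by rw [← Set.image_univ]; exact Set.ncard_image_le
    _ = k := by simp

theorem weight_lt_weight_of_card_lt {I I' : Finset (Fin k)} (h : I.card < I'.card) :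
    weight p x I < weight p x I' :=
  calc weight p x I ≤ (k + 1) * I.card + k := Nat.add_le_add_left (ncard_projLines_le I) _
    _ < (k + 1) * (I.card + 1) := by rw [Nat.mul_succ]; omega
    _ ≤ (k + 1) * I'.card := Nat.mul_le_mul_left _ h
    _ ≤ weight p x I' := Nat.le_add_right _ _

namespace Admissible

variable {I : Finset (Fin k)}

theorem mk_ne_zero (hI : Admissible p x I) {j : Fin k} (hj : j ∉ I) :
    (Submodule.Quotient.mk (x j) : V ⧸ span (ZMod p) (x '' ↑I)) ≠ 0 :=
  mt (Submodule.Quotient.mk_eq_zero _).1 (hI.2 j hj)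

theorem insert [Fact p.Prime] (hI : Admissible p x I) {j₀ : Fin k} (hj₀ : j₀ ∉ I)
    (hclass : ∀ j ∉ I, j ≠ j₀ → projLine p x I j ≠ projLine p x I j₀) :
    Admissible p x (insert j₀ I) := by
  refine ⟨?_, fun j hj hmem => ?_⟩
  · have hindep : LinearIndepOn (ZMod p) x (I : Set (Fin k)) := hI.1
    have := hindep.insert (hI.2 j₀ hj₀)
    rwa [← coe_insert] at this
  · rw [mem_insert, not_or] at hj
    rw [coe_insert, Set.image_insert_eq, mem_span_insert_iff_mkQ_mem_span_singleton] at hmem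
    exact hclass j hj.2 hj.1 (span_singleton_eq_of_mem (hI.mk_ne_zero hj.2) hmem)

theorem two_le_card_class [Fact p.Prime] (hI : Admissible p x I)
    (hmax : ∀ I' : Finset (Fin k), Admissible p x I' → weight p x I' ≤ weight p x I)
    {j₀ : Fin k} (hj₀ : j₀ ∉ I) :
    2 ≤ (Iᶜ.filter (projLine p x I · = projLine p x I j₀)).card := by
  by_contra! hlt
  have hclass : ∀ j ∉ I, j ≠ j₀ → projLine p x I j ≠ projLine p x I j₀ := by
    intro j hj hne heq
    exact hlt.not_ge (one_lt_card.2
      ⟨j, mem_filter.2 ⟨mem_compl.2 hj, heq⟩, j₀, mem_filter.2 ⟨mem_compl.2 hj₀, rfl⟩, hne⟩)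
  refine (hmax _ (hI.insert hj₀ hclass)).not_gt (weight_lt_weight_of_card_lt ?_)
  rw [card_insert_of_notMem hj₀]
  omega

end Admissible

theorem stmt_16_general (p k : ℕ) [Fact p.Prime] {V : Type} [AddCommGroup V] [Module (ZMod p) V]
    (x : Fin k → V)
    (I : Finset (Fin k)) (hI : Admissible p x I)
    (hmax : ∀ I' : Finset (Fin k), Admissible p x I' → weight p x I' ≤ weight p x I) :
    ∃ (t : ℕ) (J : Fin t → Finset (Fin k))
      (W : Fin t → Submodule (ZMod p) (V ⧸ Submodule.span (ZMod p) (x '' ↑I))),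
      (∀ h h' : Fin t, h ≠ h' → Disjoint (J h) (J h')) ∧
      (∀ j : Fin k, j ∉ I ↔ ∃ h, j ∈ J h) ∧
      (∀ h, 2 ≤ (J h).card) ∧
      Function.Injective W ∧
      (∀ h, Module.finrank (ZMod p) (W h) = 1) ∧
      (∀ h, ∀ j ∈ J h,
        Submodule.span (ZMod p) {Submodule.Quotient.mk (x j)} = W h) := by
  classical
  obtain ⟨t, J, W, hdisj, hcover, hWinj, hfiber⟩ :=
    Iᶜ.exists_fin_fiber_partition (projLine p x I)
  refine ⟨t, J, W, hdisj, fun j => by simpa using hcover j, fun h => ?_, hWinj, fun h => ?_,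
    fun h j hj => ?_⟩ <;> obtain ⟨j₀, hj₀, hJ, hW⟩ := hfiber h
  · rw [hJ]
    exact hI.two_le_card_class hmax (mem_compl.1 hj₀)
  · rw [hW]
    exact finrank_span_singleton (hI.mk_ne_zero (mem_compl.1 hj₀))
  · rw [hJ, mem_filter] at hj
    rw [hW]
    exact hj.2

/-- let `I` be a maximum-weight admissible subset for a solution
`(x₁,…,x_k)` (all `x_i ≠ 0`) of a homogeneous system whose rows sum to zero, and
`U = span(x_i : i ∈ I)`. Then `[k] \ I` partitions into parts `J₁,…,J_t` of size at
least 2, with distinct one-dimensional subspaces `W₁,…,W_t ⊆ V/U` such that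
`span(proj_{V/U}(x_j)) = W_h` for all `j ∈ J_h`. -/
theorem stmt_16 (p m k : ℕ) [Fact p.Prime] {V : Type} [AddCommGroup V] [Module (ZMod p) V]
    (a : Fin m → Fin k → ZMod p) (ha : ∀ j, ∑ i : Fin k, a j i = 0)
    (x : Fin k → V) (hx0 : ∀ i, x i ≠ 0)
    (hsol : ∀ j : Fin m, ∑ i : Fin k, a j i • x i = 0)
    (I : Finset (Fin k)) (hI : Admissible p x I)
    (hmax : ∀ I' : Finset (Fin k), Admissible p x I' → weight p x I' ≤ weight p x I) :
    ∃ (t : ℕ) (J : Fin t → Finset (Fin k))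
      (W : Fin t → Submodule (ZMod p) (V ⧸ Submodule.span (ZMod p) (x '' ↑I))),
      (∀ h h' : Fin t, h ≠ h' → Disjoint (J h) (J h')) ∧
      (∀ j : Fin k, j ∉ I ↔ ∃ h, j ∈ J h) ∧
      (∀ h, 2 ≤ (J h).card) ∧
      Function.Injective W ∧
      (∀ h, Module.finrank (ZMod p) (W h) = 1) ∧
      (∀ h, ∀ j ∈ J h,
        Submodule.span (ZMod p) {Submodule.Quotient.mk (x j)} = W h) :=
  stmt_16_general p k x I hI hmax
end

section
/- Let $k\ge 2$ and let $(x_1,\dots,x_k)$ be a tuple of vectors in an $\mathbb{F}_p$-vector space with exactly $\ell-1$ distinct values among them, where $\ell-1\le k-1$, all $x_i$ nonzero, and $\dim\operatorname{span}(x_1,\dots,x_k)\ge m+1$ for some $m$ with $m+1\le\ell-1$. Then there exist distinct indices $a,b\in[k]$ with $x_a=x_b$ and a subset $I\subseteq[k]$ with $|I|=m+1$, $a\in I$, such that the vectors $(x_i)_{i\in I}$ are linearly independent and among the vectors $x_j$ for $j\in[k]\setminus I$ there are at least $\ell-m-1$ distinct values. -/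
/-!
Since fewer than `k` values occur, some value is repeated, `x a = x b` with `a ≠ b`. Extend
`{x a}` to a maximal independent subfamily; it has at least `m + 1` members, so it contains an
independent `I ∋ a` of size `m + 1`. As `x` is injective on `I`, `b ∉ I`, so the value `x a`
is still seen outside `I`, and removing `I` loses at most the `m` values `x i`, `i ∈ I \ {a}`.
-/

open Set Module Submodule

theorem exists_finset_mem_card_eq_linearIndependent {K V ι : Type*} [DivisionRing K]
    [AddCommGroup V] [Module K V] [Finite ι] {x : ι → V} {a : ι} (ha : x a ≠ 0) {n : ℕ}
    (hn₀ : 1 ≤ n) (hn : n ≤ finrank K (span K (range x))) :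
    ∃ I : Finset ι, a ∈ I ∧ I.card = n ∧ LinearIndependent K (fun i : I => x i) := by
  classical
  have := Fintype.ofFinite ι
  obtain ⟨B, -, haB, hspan, hB⟩ :=
    exists_linearIndepOn_extension ((linearIndepOn_singleton_iff K).2 ha) (subset_univ {a})
  have hspan_eq : span K (range x) = span K (range fun i : B => x i) := by
    rw [← image_eq_range, ← image_univ]
    exact le_antisymm (span_le.2 hspan) (span_mono (image_mono (subset_univ B)))
  have hnB : n ≤ B.toFinset.card := by
    rwa [toFinset_card, ← finrank_span_eq_card hB, ← hspan_eq]
  obtain ⟨I, haI, hIB, hIcard⟩ :=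
    Finset.exists_subsuperset_card_eq (Finset.singleton_subset_iff.2 (mem_toFinset.2 (haB rfl)))
      (by simpa using hn₀) hnB
  exact ⟨I, haI (Finset.mem_singleton_self a), hIcard,
    hB.mono fun i hi => mem_toFinset.1 (hIB hi)⟩

theorem ncard_range_le_ncard_image_compl_add {ι α : Type*} [Finite ι] (x : ι → α)
    {I : Finset ι} {a b : ι} (haI : a ∈ I) (hbI : b ∉ I) (hab : x a = x b) :
    (range x).ncard ≤ (x '' {j | j ∉ I}).ncard + (I.card - 1) := by
  classical
  have hcover : range x ⊆ x '' {j | j ∉ I} ∪ x '' (I.erase a : Set ι) := by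
    rintro _ ⟨j, rfl⟩
    by_cases hjI : j ∈ I
    · by_cases hja : j = a
      · exact Or.inl ⟨b, hbI, by rw [hja, hab]⟩
      · exact Or.inr ⟨j, Finset.mem_erase.2 ⟨hja, hjI⟩, rfl⟩
    · exact Or.inl ⟨j, hjI, rfl⟩
  calc (range x).ncard
      ≤ (x '' {j | j ∉ I} ∪ x '' (I.erase a : Set ι)).ncard := ncard_le_ncard hcover
    _ ≤ (x '' {j | j ∉ I}).ncard + (x '' (I.erase a : Set ι)).ncard := ncard_union_le _ _
    _ ≤ (x '' {j | j ∉ I}).ncard + (I.card - 1) := by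
      gcongr
      calc (x '' (I.erase a : Set ι)).ncard ≤ (I.erase a : Set ι).ncard := ncard_image_le
        _ = I.card - 1 := by rw [ncard_coe_finset, Finset.card_erase_of_mem haI]

theorem stmt_19_general (p m k ℓ : ℕ) [Fact p.Prime]
    (hℓk : ℓ - 1 ≤ k - 1) (hmℓ : m + 1 ≤ ℓ - 1)
    {V : Type} [AddCommGroup V] [Module (ZMod p) V]
    (x : Fin k → V) (hx0 : ∀ i, x i ≠ 0)
    (hdist : Set.ncard (Set.range x) = ℓ - 1)
    (hdim : m + 1 ≤ Module.finrank (ZMod p) (Submodule.span (ZMod p) (Set.range x))) :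
    ∃ a b : Fin k, a ≠ b ∧ x a = x b ∧
      ∃ I : Finset (Fin k), I.card = m + 1 ∧ a ∈ I ∧
        LinearIndependent (ZMod p) (fun i : I => x i.1) ∧
        ℓ - m - 1 ≤ Set.ncard (x '' {j : Fin k | j ∉ I}) := by
  obtain ⟨a, b, hxab, hab⟩ := Function.not_injective_iff.1 fun hinj : Function.Injective x => by
    have := ncard_range_of_injective hinj
    rw [Nat.card_fin] at this
    omega
  obtain ⟨I, haI, hIcard, hI⟩ :=
    exists_finset_mem_card_eq_linearIndependent (hx0 a) (Nat.le_add_left 1 m) hdim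
  have hbI : b ∉ I := fun hbI =>
    hab (congrArg Subtype.val (hI.injective (a₁ := ⟨a, haI⟩) (a₂ := ⟨b, hbI⟩) hxab))
  refine ⟨a, b, hab, hxab, I, hIcard, haI, hI, ?_⟩
  have := ncard_range_le_ncard_image_compl_add x haI hbI hxab
  omega

/-- let `(x₁,…,x_k)` be nonzero vectors in an `𝔽_p`-vector space with
exactly `ℓ-1` distinct values, where `ℓ-1 ≤ k-1` and `m+1 ≤ ℓ-1`, spanning a subspace of
dimension at least `m+1`. Then there are distinct indices `a ≠ b` with `x_a = x_b` and a
set `I ⊆ [k]` with `|I| = m+1`, `a ∈ I`, such that the `x_i`, `i ∈ I`, are linearly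
independent and there are at least `ℓ-m-1` distinct values among `x_j`, `j ∈ [k] \ I`. -/
theorem stmt_19 (p m k ℓ : ℕ) [Fact p.Prime] (hk : 2 ≤ k)
    (hℓk : ℓ - 1 ≤ k - 1) (hmℓ : m + 1 ≤ ℓ - 1)
    {V : Type} [AddCommGroup V] [Module (ZMod p) V]
    (x : Fin k → V) (hx0 : ∀ i, x i ≠ 0)
    (hdist : Set.ncard (Set.range x) = ℓ - 1)
    (hdim : m + 1 ≤ Module.finrank (ZMod p) (Submodule.span (ZMod p) (Set.range x))) :
    ∃ a b : Fin k, a ≠ b ∧ x a = x b ∧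
      ∃ I : Finset (Fin k), I.card = m + 1 ∧ a ∈ I ∧
        LinearIndependent (ZMod p) (fun i : I => x i.1) ∧
        ℓ - m - 1 ≤ Set.ncard (x '' {j : Fin k | j ∉ I}) :=
  stmt_19_general p m k ℓ hℓk hmℓ x hx0 hdist hdim
end
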